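/- arXiv:2109.04199 — 7 statements merged into one kernel-verified Lean document; each statement's English description precedes it below -/
import Mathlib

section
/- Let α ∈ ℝ with α ≠ 0 and α ≠ 1, and let f : (0,∞) → ℝ be a differentiable function such that f(b) - f(a) = (b - a)·f'(S_α(a,b)) for all a, b > 0. Then there exist constants c₁, c₂, c₃ ∈ ℝ such that f(x) = c₁·x^α + c₂·x + c₃ for all x > 0. -/
/-!
Stolarsky means are homogeneous, and `S_α(1, β²) = S_α(1, β) · G(1, β)` with the Gini mean
`G(1, β) = ((1 + β^α) / (1 + β))^(1/(α-1))`. Splitting `f(β²t) - f(t)` at `βt` therefore shows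
that `g = f'` satisfies `(β + 1) g(G(1, β) x) = g(x) + β g(βx)`. The power `x^(α-1)` satisfies the
same affine equation, so the ratio of the increments of `g` and of `x^(α-1)` between `x` and `βx`
is unchanged when `β` is replaced by `G(1, β)`. Iterating drives `β` down to `1`, where the ratio
tends to `g'(x) / (x^(α-1))'`; hence `g(y) - g(x) = q(x) (y^(α-1) - x^(α-1))`, which forces
`g = c₁ x^(α-1) + c₂`, and integrating gives the claim.
-/

/-- The Stolarsky mean with parameter `α` of two positive reals. -/
noncomputable def stolarsky (α a b : ℝ) : ℝ :=
  if a = b then a else ((b ^ α - a ^ α) / (α * (b - a))) ^ (1 / (α - 1))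

open Real Set Filter Topology Function

lemma lt_iff_pos_mul_rpow_sub_rpow {p u v : ℝ} (hp : p ≠ 0) (hu : 0 < u) (hv : 0 < v) :
    u < v ↔ 0 < p * (v ^ p - u ^ p) := by
  rcases hp.lt_or_gt with hp | hp
  · rw [← neg_mul_neg, mul_pos_iff_of_pos_left (neg_pos.2 hp), neg_pos, sub_neg,
      rpow_lt_rpow_iff_of_neg hv hu hp]
  · rw [mul_pos_iff_of_pos_left hp, sub_pos, rpow_lt_rpow_iff hu.le hv.le hp]

lemma rpow_sub_div_mul_sub_pos {α a b : ℝ} (hα : α ≠ 0) (ha : 0 < a) (hb : 0 < b)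
    (hab : a ≠ b) : 0 < (b ^ α - a ^ α) / (α * (b - a)) := by
  wlog h : a < b generalizing a b
  · have hba : b < a := lt_of_le_of_ne (not_lt.1 h) hab.symm
    rw [← neg_sub a b, ← neg_sub (a ^ α), mul_neg, neg_div_neg_eq]
    exact this hb ha hab.symm hba
  rw [← mul_div_mul_left _ _ hα, ← mul_assoc]
  exact div_pos ((lt_iff_pos_mul_rpow_sub_rpow hα ha hb).1 h)
    (mul_pos (mul_self_pos.2 hα) (sub_pos.2 h))

lemma stolarsky_of_ne {α a b : ℝ} (h : a ≠ b) :
    stolarsky α a b = ((b ^ α - a ^ α) / (α * (b - a))) ^ (1 / (α - 1)) :=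
  if_neg h

lemma stolarsky_pos {α a b : ℝ} (hα : α ≠ 0) (ha : 0 < a) (hb : 0 < b) :
    0 < stolarsky α a b := by
  by_cases hab : a = b
  · rwa [stolarsky, if_pos hab]
  · rw [stolarsky_of_ne hab]
    exact rpow_pos_of_pos (rpow_sub_div_mul_sub_pos hα ha hb hab) _

lemma stolarsky_mul {α a b t : ℝ} (hα0 : α ≠ 0) (hα1 : α ≠ 1) (ha : 0 < a) (hb : 0 < b)
    (ht : 0 < t) : stolarsky α (t * a) (t * b) = t * stolarsky α a b := by
  by_cases hab : a = b
  · simp [stolarsky, hab]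
  have htab : t * a ≠ t * b := fun h => hab (mul_left_cancel₀ ht.ne' h)
  have hquot : ((t * b) ^ α - (t * a) ^ α) / (α * (t * b - t * a))
      = t ^ (α - 1) * ((b ^ α - a ^ α) / (α * (b - a))) := by
    have hba : b - a ≠ 0 := sub_ne_zero.2 (Ne.symm hab)
    rw [mul_rpow ht.le hb.le, mul_rpow ht.le ha.le, rpow_sub_one ht.ne']
    field_simp
  rw [stolarsky_of_ne htab, stolarsky_of_ne hab, hquot,
    mul_rpow (rpow_pos_of_pos ht _).le (rpow_sub_div_mul_sub_pos hα0 ha hb hab).le,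
    ← rpow_mul ht.le, mul_one_div_cancel (sub_ne_zero.2 hα1), rpow_one]

/-- The Gini mean `G_{α,1}(a, b)`. -/
noncomputable def giniMean (α a b : ℝ) : ℝ :=
  ((a ^ α + b ^ α) / (a + b)) ^ (1 / (α - 1))

lemma giniMean_pos {α a b : ℝ} (ha : 0 < a) (hb : 0 < b) : 0 < giniMean α a b := by
  unfold giniMean; positivity

lemma giniMean_rpow_sub_one {α a b : ℝ} (hα : α ≠ 1) (ha : 0 < a) (hb : 0 < b) :
    giniMean α a b ^ (α - 1) = (a ^ α + b ^ α) / (a + b) := by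
  rw [giniMean, ← rpow_mul (by positivity), one_div_mul_cancel (sub_ne_zero.2 hα), rpow_one]

lemma giniMean_mem_Ioo {α a b : ℝ} (hα : α ≠ 1) (ha : 0 < a) (hab : a < b) :
    giniMean α a b ∈ Ioo a b := by
  have hb : 0 < b := ha.trans hab
  have hG := giniMean_pos (α := α) ha hb
  have hp : α - 1 ≠ 0 := sub_ne_zero.2 hα
  have hpow := (lt_iff_pos_mul_rpow_sub_rpow hp ha hb).1 hab
  have hsplit : ∀ x : ℝ, 0 < x → x ^ α = x * x ^ (α - 1) := fun x hx => by
    rw [rpow_sub_one hx.ne']; field_simp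
  rw [mem_Ioo, lt_iff_pos_mul_rpow_sub_rpow hp ha hG, lt_iff_pos_mul_rpow_sub_rpow hp hG hb,
    giniMean_rpow_sub_one hα ha hb, hsplit a ha, hsplit b hb]
  have hlow : (a * a ^ (α - 1) + b * b ^ (α - 1)) / (a + b) - a ^ (α - 1)
      = b / (a + b) * (b ^ (α - 1) - a ^ (α - 1)) := by field_simp; ring
  have hupp : b ^ (α - 1) - (a * a ^ (α - 1) + b * b ^ (α - 1)) / (a + b)
      = a / (a + b) * (b ^ (α - 1) - a ^ (α - 1)) := by field_simp; ring
  rw [hlow, hupp, mul_left_comm, mul_left_comm (α - 1)]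
  exact ⟨by positivity, by positivity⟩

lemma continuousAt_giniMean {α a b : ℝ} (ha : 0 < a) (hb : 0 < b) :
    ContinuousAt (giniMean α a) b := by
  unfold giniMean
  fun_prop (disch := first | positivity | exact Or.inl (by positivity))

lemma stolarsky_one_sq {α β : ℝ} (hα0 : α ≠ 0) (hβ0 : 0 < β) (hβ1 : β ≠ 1) :
    stolarsky α 1 (β ^ 2) = stolarsky α 1 β * giniMean α 1 β := by
  have hβ2 : (1 : ℝ) ≠ β ^ 2 := by
    intro h; apply hβ1; nlinarith [sq_nonneg (β - 1)]
  rw [stolarsky_of_ne hβ2, stolarsky_of_ne (Ne.symm hβ1), giniMean,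
    ← mul_rpow (rpow_sub_div_mul_sub_pos hα0 one_pos hβ0 (Ne.symm hβ1)).le (by positivity),
    one_rpow, ← rpow_pow_comm hβ0.le]
  congr 1
  have h1 : β - 1 ≠ 0 := sub_ne_zero.2 hβ1
  have h2 : β ^ 2 - 1 ≠ 0 := sub_ne_zero.2 hβ2.symm
  field_simp
  ring

lemma lt_iterate_of_lt {d : ℝ → ℝ} {c β : ℝ} (hd : ∀ y, c < y → c < d y) (hβ : c < β) (k : ℕ) :
    c < d^[k] β := by
  induction k with
  | zero => exact hβ
  | succ k ih => rw [iterate_succ_apply']; exact hd _ ih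

lemma tendsto_iterate_nhdsGT {d : ℝ → ℝ} {c β : ℝ} (hd : ∀ y, c < y → c < d y ∧ d y < y)
    (hdc : ∀ y, c < y → ContinuousAt d y) (hβ : c < β) :
    Tendsto (fun k => d^[k] β) atTop (𝓝[>] c) := by
  have hc : ∀ k, c < d^[k] β := lt_iterate_of_lt (fun y hy => (hd y hy).1) hβ
  have hanti : Antitone fun k => d^[k] β := antitone_nat_of_succ_le fun k => by
    rw [iterate_succ_apply']; exact (hd _ (hc k)).2.le
  have hbdd : BddBelow (range fun k => d^[k] β) := ⟨c, by rintro _ ⟨k, rfl⟩; exact (hc k).le⟩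
  have hlim := tendsto_atTop_ciInf hanti hbdd
  have hinf : (⨅ k, d^[k] β) = c := by
    refine le_antisymm ?_ (le_ciInf fun k => (hc k).le)
    by_contra! hlt
    exact (hd _ hlt).2.ne (isFixedPt_of_tendsto_iterate hlim (hdc _ hlt))
  rw [hinf] at hlim
  exact tendsto_nhdsWithin_iff.2 ⟨hlim, Eventually.of_forall hc⟩

lemma eq_of_tendsto_of_forall_comp_eq {d h : ℝ → ℝ} {c L β : ℝ}
    (hd : ∀ y, c < y → c < d y ∧ d y < y) (hdc : ∀ y, c < y → ContinuousAt d y)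
    (hh : ∀ y, c < y → h (d y) = h y) (hlim : Tendsto h (𝓝[>] c) (𝓝 L)) (hβ : c < β) :
    h β = L := by
  have hconst : ∀ k, h (d^[k] β) = h β := fun k => by
    induction k with
    | zero => rfl
    | succ k ih =>
      rw [iterate_succ_apply', hh _ (lt_iterate_of_lt (fun y hy => (hd y hy).1) hβ k), ih]
  refine tendsto_nhds_unique ?_ (hlim.comp (tendsto_iterate_nhdsGT hd hdc hβ))
  simp only [comp_def, hconst, tendsto_const_nhds]

lemma tendsto_sub_div_sub_of_hasDerivAt {g φ : ℝ → ℝ} {g' φ' x : ℝ} (hg : HasDerivAt g g' x)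
    (hφ : HasDerivAt φ φ' x) (hφ' : φ' ≠ 0) :
    Tendsto (fun y => (g y - g x) / (φ y - φ x)) (𝓝[≠] x) (𝓝 (g' / φ')) := by
  refine ((hasDerivAt_iff_tendsto_slope.1 hg).div
    (hasDerivAt_iff_tendsto_slope.1 hφ) hφ').congr' ?_
  filter_upwards [self_mem_nhdsWithin] with y hy
  rw [Pi.div_apply, slope_def_field, slope_def_field, div_div_div_cancel_right₀ (sub_ne_zero.2 hy)]

def GiniFunctionalEq (α : ℝ) (g : ℝ → ℝ) : Prop :=
  ∀ x > 0, ∀ β > 1, (β + 1) * g (giniMean α 1 β * x) = g x + β * g (β * x)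

lemma giniFunctionalEq_rpow_sub_one {α : ℝ} (hα : α ≠ 1) :
    GiniFunctionalEq α fun x => x ^ (α - 1) := by
  intro x hx β hβ
  have hβ0 : 0 < β := one_pos.trans hβ
  dsimp only
  rw [mul_rpow (giniMean_pos one_pos hβ0).le hx.le, giniMean_rpow_sub_one hα one_pos hβ0,
    mul_rpow hβ0.le hx.le, one_rpow, rpow_sub_one hβ0.ne']
  field_simp
  ring

lemma GiniFunctionalEq.sub_eq {α : ℝ} {g : ℝ → ℝ} (hg : GiniFunctionalEq α g) {x β : ℝ}
    (hx : 0 < x) (hβ : 1 < β) :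
    g (giniMean α 1 β * x) - g x = β / (β + 1) * (g (β * x) - g x) := by
  rw [div_mul_eq_mul_div, eq_div_iff (by linarith)]
  linear_combination hg x hx β hβ

lemma GiniFunctionalEq.sub_eq_mul_rpow_sub {α : ℝ} {g : ℝ → ℝ} (hα : α ≠ 1)
    (hg : GiniFunctionalEq α g) {x y : ℝ} (hgx : DifferentiableAt ℝ g x) (hx : 0 < x)
    (hxy : x < y) :
    g y - g x = deriv g x / ((α - 1) * x ^ (α - 1 - 1)) * (y ^ (α - 1) - x ^ (α - 1)) := by
  set φ : ℝ → ℝ := fun x => x ^ (α - 1)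
  have hφeq : GiniFunctionalEq α φ := giniFunctionalEq_rpow_sub_one hα
  have hφ : HasDerivAt φ ((α - 1) * x ^ (α - 1 - 1)) x := hasDerivAt_rpow_const (Or.inl hx.ne')
  have hφ' : (α - 1) * x ^ (α - 1 - 1) ≠ 0 :=
    mul_ne_zero (sub_ne_zero.2 hα) (rpow_pos_of_pos hx _).ne'
  have hφinj : ∀ y, x < y → φ y - φ x ≠ 0 := fun y hxy =>
    sub_ne_zero.2 fun h => hxy.ne' (rpow_left_injOn (sub_ne_zero.2 hα) (hx.trans hxy).le hx.le h)
  have hscale : Tendsto (fun β => β * x) (𝓝[>] 1) (𝓝[≠] x) := by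
    refine tendsto_nhdsWithin_of_tendsto_nhds_of_eventually_within _ ?_ ?_
    · exact ((continuous_mul_const x).tendsto' 1 x (one_mul x)).mono_left nhdsWithin_le_nhds
    · filter_upwards [self_mem_nhdsWithin] with β hβ
      exact (lt_mul_of_one_lt_left hx hβ).ne'
  have hratio := eq_of_tendsto_of_forall_comp_eq (c := 1) (β := y / x) (d := giniMean α 1)
    (h := fun β => (g (β * x) - g x) / (φ (β * x) - φ x))
    (fun β hβ => giniMean_mem_Ioo hα one_pos hβ)
    (fun β hβ => continuousAt_giniMean one_pos (one_pos.trans hβ))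
    (fun β hβ => by
      rw [hg.sub_eq hx hβ, hφeq.sub_eq hx hβ]
      exact mul_div_mul_left _ _ (div_pos (by linarith) (by linarith)).ne')
    ((tendsto_sub_div_sub_of_hasDerivAt hgx.hasDerivAt hφ hφ').comp hscale)
    ((one_lt_div hx).2 hxy)
  rw [div_mul_cancel₀ y hx.ne', div_eq_iff (hφinj y hxy)] at hratio
  exact hratio

lemma exists_eq_mul_add_of_sub_eq_mul_sub {g φ q : ℝ → ℝ} (hφ : InjOn φ (Ioi 0))
    (h : ∀ x y, 0 < x → x < y → g y - g x = q x * (φ y - φ x)) :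
    ∃ c₁ c₂ : ℝ, ∀ x > 0, g x = c₁ * φ x + c₂ := by
  have hq : ∀ x y, 0 < x → x < y → q x = q y := fun x y hx hxy => by
    have hy : 0 < y := hx.trans hxy
    have hφy : φ (y + 1) - φ y ≠ 0 :=
      sub_ne_zero.2 fun h => by simpa using hφ (by simp; linarith) hy h
    apply mul_right_cancel₀ hφy
    linear_combination h x y hx hxy + h y (y + 1) hy (by linarith) - h x (y + 1) hx (by linarith)
  refine ⟨q 1, g 1 - q 1 * φ 1, fun x hx => ?_⟩
  rcases lt_trichotomy x 1 with hx1 | rfl | hx1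
  · linear_combination -(h x 1 hx hx1) - (φ 1 - φ x) * hq x 1 hx hx1
  · ring
  · linear_combination h 1 x one_pos hx1

lemma GiniFunctionalEq.exists_eq_mul_rpow_add {α : ℝ} {g : ℝ → ℝ} (hα : α ≠ 1)
    (hg : GiniFunctionalEq α g) (hgd : ∀ x > 0, DifferentiableAt ℝ g x) :
    ∃ c₁ c₂ : ℝ, ∀ x > 0, g x = c₁ * x ^ (α - 1) + c₂ :=
  exists_eq_mul_add_of_sub_eq_mul_sub
    ((rpow_left_injOn (sub_ne_zero.2 hα)).mono fun _ (hx : (0 : ℝ) < _) => hx.le)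
    fun _ _ hx hxy => hg.sub_eq_mul_rpow_sub hα (hgd _ hx) hx hxy

def StolarskyMeanValueProperty (α : ℝ) (f : ℝ → ℝ) : Prop :=
  ∀ a ∈ Ioi (0 : ℝ), ∀ b ∈ Ioi (0 : ℝ), f b - f a = (b - a) * deriv f (stolarsky α a b)

namespace StolarskyMeanValueProperty

variable {α : ℝ} {f : ℝ → ℝ}

lemma sub_eq (hf : StolarskyMeanValueProperty α f) (hα0 : α ≠ 0) (hα1 : α ≠ 1) {t β : ℝ}
    (ht : 0 < t) (hβ : 0 < β) :
    f (β * t) - f t = (β - 1) * t * deriv f (stolarsky α 1 β * t) := by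
  have hmul := stolarsky_mul hα0 hα1 one_pos hβ ht
  rw [mul_one, mul_comm t β] at hmul
  rw [hf t ht (β * t) (mul_pos hβ ht), hmul, mul_comm t (stolarsky α 1 β)]
  ring

lemma giniFunctionalEq_deriv (hf : StolarskyMeanValueProperty α f) (hα0 : α ≠ 0)
    (hα1 : α ≠ 1) : GiniFunctionalEq α (deriv f) := by
  intro x hx β hβ
  have hβ0 : 0 < β := one_pos.trans hβ
  have hs : 0 < stolarsky α 1 β := stolarsky_pos hα0 one_pos hβ0
  obtain ⟨t, ht, hst⟩ : ∃ t > 0, stolarsky α 1 β * t = x :=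
    ⟨x / stolarsky α 1 β, div_pos hx hs, mul_div_cancel₀ x hs.ne'⟩
  have h1 : f (β * t) - f t = (β - 1) * t * deriv f x := by
    rw [hf.sub_eq hα0 hα1 ht hβ0, hst]
  have h2 : f (β ^ 2 * t) - f (β * t) = (β - 1) * (β * t) * deriv f (β * x) := by
    rw [sq, mul_assoc, hf.sub_eq hα0 hα1 (mul_pos hβ0 ht) hβ0, mul_left_comm (stolarsky α 1 β), hst]
  have h3 : f (β ^ 2 * t) - f t = (β ^ 2 - 1) * t * deriv f (giniMean α 1 β * x) := by
    rw [hf.sub_eq hα0 hα1 ht (pow_pos hβ0 2), stolarsky_one_sq hα0 hβ0 hβ.ne',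
      mul_right_comm (stolarsky α 1 β), hst, mul_comm x]
  have hβt : (β - 1) * t ≠ 0 := mul_ne_zero (sub_ne_zero.2 hβ.ne') ht.ne'
  apply mul_left_cancel₀ hβt
  linear_combination h1 + h2 - h3

lemma differentiableAt_deriv (hf : StolarskyMeanValueProperty α f) (hα0 : α ≠ 0)
    (hα1 : α ≠ 1) (hdiff : ∀ x > 0, DifferentiableAt ℝ f x) {x : ℝ} (hx : 0 < x) :
    DifferentiableAt ℝ (deriv f) x := by
  set s := stolarsky α 1 2
  have hs : 0 < s := stolarsky_pos hα0 one_pos two_pos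
  have heq : deriv f =ᶠ[𝓝 x] fun y => (f (2 * (y / s)) - f (y / s)) / (y / s) := by
    filter_upwards [Ioi_mem_nhds hx] with y hy
    have hys : 0 < y / s := div_pos hy hs
    rw [hf.sub_eq hα0 hα1 hys two_pos, mul_div_cancel₀ y hs.ne']
    field_simp [hys.ne', (mem_Ioi.1 hy).ne']
    ring
  refine DifferentiableAt.congr_of_eventuallyEq ?_ heq
  have hxs : 0 < x / s := div_pos hx hs
  have hf1 := hdiff _ hxs
  have hf2 := hdiff _ (mul_pos two_pos hxs)
  fun_prop (disch := positivity)

end StolarskyMeanValueProperty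

lemma exists_eq_rpow_add_of_deriv_eq {α c₁ c₂ : ℝ} {f : ℝ → ℝ} (hα : α ≠ 0)
    (hdiff : ∀ x > 0, DifferentiableAt ℝ f x) (hf' : ∀ x > 0, deriv f x = c₁ * x ^ (α - 1) + c₂) :
    ∃ c₃ : ℝ, ∀ x > 0, f x = c₁ / α * x ^ α + c₂ * x + c₃ := by
  have hF : ∀ x > 0, HasDerivAt (fun x => c₁ / α * x ^ α + c₂ * x) (c₁ * x ^ (α - 1) + c₂) x :=
    fun x hx => by
      refine (((hasDerivAt_rpow_const (Or.inl hx.ne')).const_mul (c₁ / α)).add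
        ((hasDerivAt_id x).const_mul c₂)).congr_deriv ?_
      field_simp
  exact isOpen_Ioi.exists_eq_add_of_deriv_eq isPreconnected_Ioi
    (fun x hx => (hdiff x hx).differentiableWithinAt)
    (fun x hx => (hF x hx).differentiableAt.differentiableWithinAt)
    fun x hx => by rw [hf' x hx, (hF x hx).deriv]

theorem stmt_0 (α : ℝ) (hα0 : α ≠ 0) (hα1 : α ≠ 1) (f : ℝ → ℝ)
    (hdiff : ∀ x ∈ Set.Ioi (0 : ℝ), DifferentiableAt ℝ f x)
    (hfde : ∀ a ∈ Set.Ioi (0 : ℝ), ∀ b ∈ Set.Ioi (0 : ℝ),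
      f b - f a = (b - a) * deriv f (stolarsky α a b)) :
    ∃ c₁ c₂ c₃ : ℝ, ∀ x ∈ Set.Ioi (0 : ℝ), f x = c₁ * x ^ α + c₂ * x + c₃ := by
  have hf : StolarskyMeanValueProperty α f := hfde
  obtain ⟨c₁, c₂, hf'⟩ := (hf.giniFunctionalEq_deriv hα0 hα1).exists_eq_mul_rpow_add hα1
    fun x hx => hf.differentiableAt_deriv hα0 hα1 hdiff hx
  obtain ⟨c₃, hc₃⟩ := exists_eq_rpow_add_of_deriv_eq hα0 hdiff hf'
  exact ⟨c₁ / α, c₂, c₃, hc₃⟩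
end

section
/- Let f : (0,∞) → ℝ be a differentiable function such that f(b) - f(a) = (b - a)·f'(S₀(a,b)) for all a, b > 0. Then there exist constants c₁, c₂, c₃ ∈ ℝ such that f(x) = c₁·log(x) + c₂·x + c₃ for all x > 0. -/
set_option maxHeartbeats 1000000

/-- The logarithmic mean of two positive reals. -/
noncomputable def logMean (a b : ℝ) : ℝ :=
  if a = b then a else (b - a) / (Real.log b - Real.log a)

lemma logMean_scale (a t : ℝ) (ha : 0 < a) (ht : 1 < t) :
    logMean a (a * t) = a * (t - 1) / Real.log t := by
  have hne : a ≠ a * t := by nlinarith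
  rw [logMean, if_neg hne, Real.log_mul (ne_of_gt ha) (by positivity)]
  ring_nf

theorem stmt_1 (f : ℝ → ℝ)
    (hdiff : ∀ x ∈ Set.Ioi (0 : ℝ), DifferentiableAt ℝ f x)
    (hfde : ∀ a ∈ Set.Ioi (0 : ℝ), ∀ b ∈ Set.Ioi (0 : ℝ),
      f b - f a = (b - a) * deriv f (logMean a b)) :
    ∃ c₁ c₂ c₃ : ℝ, ∀ x ∈ Set.Ioi (0 : ℝ), f x = c₁ * Real.log x + c₂ * x + c₃ := by
  set h : ℝ → ℝ := deriv f with hh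
  -- key scaled functional equation
  have key : ∀ a : ℝ, 0 < a → ∀ t : ℝ, 1 < t →
      f (a * t) - f a = a * (t - 1) * h (a * (t - 1) / Real.log t) := by
    intro a ha t ht
    have := hfde a (Set.mem_Ioi.mpr ha) (a * t) (Set.mem_Ioi.mpr (by positivity))
    rw [logMean_scale a t ha ht] at this
    rw [this]; ring
  -- explicit continuous formula for H(y) = y * h y
  set e : ℝ := Real.exp 1 with he
  have he1 : 1 < e := by
    rw [he]; calc (1:ℝ) < 2 := one_lt_two
    _ < Real.exp 1 := by have := Real.exp_one_gt_d9; linarith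
  have hHform : ∀ y : ℝ, 0 < y → y * h y = f (y / (e - 1) * e) - f (y / (e - 1)) := by
    intro y hy
    have ha : (0:ℝ) < y / (e - 1) := by
      have : (0:ℝ) < e - 1 := by linarith
      positivity
    have hloge : Real.log e = 1 := by rw [he, Real.log_exp]
    have := key (y / (e - 1)) ha e he1
    rw [hloge] at this
    have hne : e - 1 ≠ 0 := by linarith
    have h2 : y / (e - 1) * (e - 1) / 1 = y := by field_simp
    have h3 : y / (e - 1) * (e - 1) = y := by field_simp
    rw [h2, h3] at this
    rw [this]
  have midpt : ∀ u v : ℝ, 0 < u → 0 < v → u * h u + v * h v = (u + v) * h ((u + v) / 2) := by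
    have core : ∀ u v : ℝ, 0 < u → u < v → u * h u + v * h v = (u + v) * h ((u + v) / 2) := by
      intro u v hu huv
      set t := v / u with htdef
      have ht : 1 < t := (one_lt_div hu).mpr huv
      have ht1 : (0:ℝ) < t - 1 := by linarith
      have hlt : 0 < Real.log t := Real.log_pos ht
      have hut : u * t = v := by rw [htdef]; field_simp
      set x := u * Real.log t / (t - 1) with hxdef
      have hx : 0 < x := by positivity
      have hA : x * (t - 1) = u * Real.log t := by rw [hxdef]; field_simp
      have hB : x * t * (t - 1) = v * Real.log t := by
        linear_combination t * hA + Real.log t * hut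
      have hC : x * (t ^ 2 - 1) = (u + v) * Real.log t := by
        linear_combination (t + 1) * hA + Real.log t * hut
      have e1 := key x hx t ht
      have e2 := key (x * t) (by positivity) t ht
      have e3 := key x hx (t ^ 2) (by nlinarith)
      have hxtt : x * t * t = x * (t ^ 2) := by ring
      rw [hxtt] at e2
      have hlog2 : Real.log (t ^ 2) = 2 * Real.log t := by
        rw [Real.log_pow]; push_cast; ring
      have harg1 : x * (t - 1) / Real.log t = u := by
        rw [hA]; field_simp
      have harg2 : x * t * (t - 1) / Real.log t = v := by
        rw [hB]; field_simp
      have harg3 : x * (t ^ 2 - 1) / Real.log (t ^ 2) = (u + v) / 2 := by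
        rw [hlog2, hC]; field_simp
      rw [harg1] at e1
      rw [harg2] at e2
      rw [hlog2] at e3
      have harg3' : x * (t ^ 2 - 1) / (2 * Real.log t) = (u + v) / 2 := by
        rw [hC]; field_simp
      rw [harg3'] at e3
      have comb : x * (t - 1) * h u + x * t * (t - 1) * h v
          = x * (t ^ 2 - 1) * h ((u + v) / 2) := by linarith [e1, e2, e3]
      rw [hA, hB, hC] at comb
      have goal2 : Real.log t * (u * h u + v * h v)
          = Real.log t * ((u + v) * h ((u + v) / 2)) := by linear_combination comb
      exact mul_left_cancel₀ (ne_of_gt hlt) goal2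
    intro u v hu hv
    rcases lt_trichotomy u v with hlt | heq | hgt
    · exact core u v hu hlt
    · subst heq
      have hm : (u + u) / 2 = u := by ring
      rw [hm]; ring
    · have := core v u hv hgt
      have hm : (v + u) / 2 = (u + v) / 2 := by ring
      rw [hm] at this; linarith
  have hem1 : (0:ℝ) < e - 1 := by linarith
  set Φ : ℝ → ℝ := fun y => f (y / (e - 1) * e) - f (y / (e - 1)) with hΦdef
  have hΦeq : ∀ y : ℝ, 0 < y → Φ y = y * h y := fun y hy => (hHform y hy).symm
  have hΦcont : ∀ y : ℝ, 0 < y → ContinuousAt Φ y := by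
    intro y hy
    have hd1 : ContinuousAt f (y / (e - 1) * e) :=
      (hdiff _ (Set.mem_Ioi.mpr (mul_pos (div_pos hy hem1) (by linarith)))).continuousAt
    have hd2 : ContinuousAt f (y / (e - 1)) :=
      (hdiff _ (Set.mem_Ioi.mpr (div_pos hy hem1))).continuousAt
    have hg1 : ContinuousAt (fun y : ℝ => y / (e - 1) * e) y := by fun_prop
    have hg2 : ContinuousAt (fun y : ℝ => y / (e - 1)) y := by fun_prop
    have c1 : ContinuousAt (fun z : ℝ => f (z / (e - 1) * e)) y := ContinuousAt.comp hd1 hg1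
    have c2 : ContinuousAt (fun z : ℝ => f (z / (e - 1))) y := ContinuousAt.comp hd2 hg2
    exact c1.sub c2
  set α : ℝ := Φ 2 - Φ 1 with hα
  set β : ℝ := 2 * Φ 1 - Φ 2 with hβ
  set G : ℝ → ℝ := fun y => Φ y - (α * y + β) with hGdef
  have hG1 : G 1 = 0 := by
    show Φ 1 - (α * 1 + β) = 0
    rw [hα, hβ]; ring
  have hG2 : G 2 = 0 := by
    show Φ 2 - (α * 2 + β) = 0
    rw [hα, hβ]; ring
  have hGmid : ∀ u v : ℝ, 0 < u → 0 < v → G u + G v = 2 * G ((u + v) / 2) := by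
    intro u v hu hv
    have hm : 0 < (u + v) / 2 := by linarith
    have hmp := midpt u v hu hv
    show (Φ u - (α * u + β)) + (Φ v - (α * v + β)) = 2 * (Φ ((u + v) / 2) - (α * ((u + v) / 2) + β))
    rw [hΦeq u hu, hΦeq v hv, hΦeq _ hm]
    linear_combination hmp
  have hGnat : ∀ n : ℕ, G ((n : ℝ) + 1) = 0 ∧ G ((n : ℝ) + 2) = 0 := by
    intro n
    induction n with
    | zero => constructor
              · simpa using hG1
              · simpa using hG2
    | succ n ih =>
      obtain ⟨ih1, ih2⟩ := ih
      have c1 : G ((↑(n + 1) : ℝ) + 1) = 0 := by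
        push_cast
        have harg : (n : ℝ) + 1 + 1 = (n : ℝ) + 2 := by ring
        rw [harg]; exact ih2
      refine ⟨c1, ?_⟩
      push_cast
      have hmid := hGmid ((n : ℝ) + 1) ((n : ℝ) + 3) (by positivity) (by positivity)
      have harg : ((n : ℝ) + 1 + ((n : ℝ) + 3)) / 2 = (n : ℝ) + 2 := by ring
      rw [harg] at hmid
      have harg2 : (n : ℝ) + 1 + 2 = (n : ℝ) + 3 := by ring
      rw [harg2]
      linarith [hmid, ih1, ih2]
  have hGdy : ∀ k : ℕ, ∀ p : ℕ, 1 ≤ p → G ((p : ℝ) / 2 ^ k) = 0 := by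
    intro k
    induction k with
    | zero =>
      intro p hp
      have hnat : (p - 1) + 1 = p := Nat.succ_pred_eq_of_pos hp
      have harg : ((p : ℝ)) / 2 ^ (0:ℕ) = ((p - 1 : ℕ) : ℝ) + 1 := by
        rw [pow_zero, div_one]; exact_mod_cast hnat.symm
      rw [harg]
      exact (hGnat (p - 1)).1
    | succ k ih =>
      have heven : ∀ q : ℕ, 1 ≤ q → G ((2 * (q : ℝ)) / 2 ^ (k + 1)) = 0 := by
        intro q hq
        have harg : (2 * (q : ℝ)) / 2 ^ (k + 1) = (q : ℝ) / 2 ^ k := by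
          rw [pow_succ]; field_simp
        rw [harg]; exact ih q hq
      have hodd : ∀ q : ℕ, 1 ≤ q → G ((2 * (q : ℝ) + 1) / 2 ^ (k + 1)) = 0 := by
        intro q hq
        have hq' : (0:ℝ) < (q : ℝ) := by exact_mod_cast hq
        have hu : (0:ℝ) < (2 * (q : ℝ)) / 2 ^ (k + 1) := by positivity
        have hv : (0:ℝ) < (2 * (q : ℝ) + 2) / 2 ^ (k + 1) := by positivity
        have hmid := hGmid _ _ hu hv
        have harg : ((2 * (q : ℝ)) / 2 ^ (k + 1) + (2 * (q : ℝ) + 2) / 2 ^ (k + 1)) / 2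
            = (2 * (q : ℝ) + 1) / 2 ^ (k + 1) := by ring
        rw [harg] at hmid
        have h1 : G ((2 * (q : ℝ)) / 2 ^ (k + 1)) = 0 := heven q hq
        have h2 : G ((2 * (q : ℝ) + 2) / 2 ^ (k + 1)) = 0 := by
          have := heven (q + 1) (by omega)
          have harg2 : (2 * ((q : ℝ) + 1)) / 2 ^ (k + 1) = (2 * (q : ℝ) + 2) / 2 ^ (k + 1) := by ring
          rw [← harg2]
          push_cast at this ⊢
          exact this
        linarith
      intro p hp
      rcases Nat.even_or_odd p with ⟨q, hq⟩ | ⟨q, hq⟩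
      · have hq1 : 1 ≤ q := by omega
        have : (p : ℝ) = 2 * (q : ℝ) := by rw [hq]; push_cast; ring
        rw [this]; exact heven q hq1
      · rcases Nat.eq_zero_or_pos q with rfl | hq1
        · -- p = 1
          have hp1 : (p : ℝ) = 1 := by rw [hq]; norm_num
          rw [hp1]
          have hu : (0:ℝ) < 1 / 2 ^ (k + 1) := by positivity
          have hv : (0:ℝ) < 3 / 2 ^ (k + 1) := by positivity
          have hmid := hGmid _ _ hu hv
          have harg : ((1:ℝ) / 2 ^ (k + 1) + 3 / 2 ^ (k + 1)) / 2 = (2:ℝ) / 2 ^ (k + 1) := by ring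
          rw [harg] at hmid
          have h2 : G ((2:ℝ) / 2 ^ (k + 1)) = 0 := by
            have := heven 1 le_rfl
            push_cast at this
            convert this using 2
            norm_num
          have h3 : G ((3:ℝ) / 2 ^ (k + 1)) = 0 := by
            have := hodd 1 le_rfl
            push_cast at this
            convert this using 2
            norm_num
          linarith
        · have : (p : ℝ) = 2 * (q : ℝ) + 1 := by rw [hq]; push_cast; ring
          rw [this]; exact hodd q hq1
  have hGzero : ∀ y : ℝ, 0 < y → G y = 0 := by
    intro y hy
    have hcont : ContinuousAt G y := by
      have h1 := hΦcont y hy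
      have h2 : ContinuousAt (fun y : ℝ => α * y + β) y := by fun_prop
      exact h1.sub h2
    set q : ℕ → ℝ := fun n => ((⌈y * 2 ^ n⌉₊ : ℕ) : ℝ) / 2 ^ n with hqdef
    have hq0 : ∀ n, G (q n) = 0 := by
      intro n
      exact hGdy n ⌈y * 2 ^ n⌉₊ (Nat.one_le_ceil_iff.mpr (by positivity))
    have hle1 : ∀ n, y ≤ q n := by
      intro n
      show y ≤ ((⌈y * 2 ^ n⌉₊ : ℕ) : ℝ) / 2 ^ n
      rw [le_div_iff₀ (by positivity)]
      exact Nat.le_ceil _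
    have hle2 : ∀ n, q n ≤ y + (1/2) ^ n := by
      intro n
      show ((⌈y * 2 ^ n⌉₊ : ℕ) : ℝ) / 2 ^ n ≤ y + (1/2) ^ n
      rw [div_le_iff₀ (by positivity)]
      have hcl : ((⌈y * 2 ^ n⌉₊ : ℕ) : ℝ) ≤ y * 2 ^ n + 1 :=
        le_of_lt (Nat.ceil_lt_add_one (by positivity))
      have hpow : ((1:ℝ)/2) ^ n * 2 ^ n = 1 := by
        rw [← mul_pow]; norm_num
      nlinarith [hcl, hpow]
    have hten : Filter.Tendsto q Filter.atTop (nhds y) := by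
      have hub : Filter.Tendsto (fun n : ℕ => y + (1/2 : ℝ) ^ n) Filter.atTop (nhds y) := by
        have := tendsto_pow_atTop_nhds_zero_of_lt_one (by norm_num : (0:ℝ) ≤ 1/2) (by norm_num)
        simpa using tendsto_const_nhds.add this
      exact tendsto_of_tendsto_of_tendsto_of_le_of_le tendsto_const_nhds hub hle1 hle2
    have hgt : Filter.Tendsto (fun n => G (q n)) Filter.atTop (nhds (G y)) :=
      (hcont.tendsto).comp hten
    have hgt0 : Filter.Tendsto (fun n => G (q n)) Filter.atTop (nhds 0) := by
      simp only [hq0]; exact tendsto_const_nhds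
    exact tendsto_nhds_unique hgt hgt0
  have hhform : ∀ y : ℝ, 0 < y → y * h y = α * y + β := by
    intro y hy
    have hz := hGzero y hy
    have : Φ y - (α * y + β) = 0 := hz
    rw [hΦeq y hy] at this
    linarith
  refine ⟨β, α, f 1 - α, ?_⟩
  intro x hx
  rw [Set.mem_Ioi] at hx
  rcases eq_or_ne x 1 with rfl | hx1
  · simp [Real.log_one]
  · have hlog : Real.log x ≠ 0 ∧ 0 < (x - 1) / Real.log x := by
      rcases lt_or_gt_of_ne hx1 with hlt | hgt
      · have := Real.log_neg hx hlt
        exact ⟨ne_of_lt this, div_pos_of_neg_of_neg (by linarith) this⟩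
      · have := Real.log_pos hgt
        exact ⟨ne_of_gt this, div_pos (by linarith) this⟩
    obtain ⟨hlx, hLpos⟩ := hlog
    set L : ℝ := (x - 1) / Real.log x with hL
    have hlm : logMean 1 x = L := by
      rw [logMean, if_neg (fun hcontra => hx1 hcontra.symm), Real.log_one, hL]
      norm_num
    have heq := hfde 1 (Set.mem_Ioi.mpr one_pos) x (Set.mem_Ioi.mpr hx)
    rw [hlm] at heq
    have hLh := hhform L hLpos
    have hxL : x - 1 = L * Real.log x := by rw [hL]; field_simp
    linear_combination heq + h L * hxL + Real.log x * hLh - α * hxL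
end

section
/- Let f : (0,∞) → ℝ be a differentiable function such that f(b) - f(a) = (b - a)·f'(S₁(a,b)) for all a, b > 0. Then there exist constants c₁, c₂, c₃ ∈ ℝ such that f(x) = c₁·x·log(x) + c₂·x + c₃ for all x > 0. -/
/-- The identric mean of two positive reals. -/
noncomputable def identricMean (a b : ℝ) : ℝ :=
  if a = b then a
  else Real.exp (-1) * Real.exp ((b * Real.log b - a * Real.log a) / (b - a))

/-!
`log (identricMean a b)` is the mean of `log` over `[a, b]`, i.e. `identricMean a b` is the
mean-value point of `x log x - x`. Fix `0 < b < y` and pick `a ≥ y` with `identricMean a b = y`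
(intermediate value theorem, using `a / e < identricMean a b < a`). Since `b ↦ identricMean a b`
has nonzero strict derivative at `b`, the inverse function theorem turns
`f' (identricMean a x) = (f x - f a) / (x - a)` into differentiability of `f'` at `y`, with
`f' b - f' y = y f'' y (log b - log y)`. Comparing two values of `b` below `y` and `z` shows that
`y f'' y` is constant, so `f'` is affine in `log`, and the equation with `a = 1` recovers `f`.
-/

open Real Filter Topology

theorem HasStrictDerivAt.hasDerivAt_of_comp_eventuallyEq {𝕜 : Type*} [NontriviallyNormedField 𝕜]
    [CompleteSpace 𝕜] {φ g q : 𝕜 → 𝕜} {φ' q' b : 𝕜} (hφ : HasStrictDerivAt φ φ' b)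
    (hφ' : φ' ≠ 0) (hq : HasDerivAt q q' b) (hgq : ∀ᶠ x in 𝓝 b, g (φ x) = q x) :
    HasDerivAt g (q' / φ') (φ b) := by
  set χ := hφ.localInverse φ φ' b hφ'
  have hχ : HasStrictDerivAt χ φ'⁻¹ (φ b) := hφ.to_localInverse hφ'
  have hχb : χ (φ b) = b := (hφ.eventually_left_inverse hφ').self_of_nhds
  have hχ_tendsto : Tendsto χ (𝓝 (φ b)) (𝓝 b) := by
    simpa only [hχb] using hχ.hasDerivAt.continuousAt.tendsto
  have hg : g =ᶠ[𝓝 (φ b)] q ∘ χ := by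
    filter_upwards [hφ.eventually_right_inverse hφ', hχ_tendsto.eventually hgq] with z hz hgz
    rw [Function.comp_apply, ← hgz, hz]
  rw [div_eq_mul_inv]
  exact ((hχb ▸ hq).comp _ hχ.hasDerivAt).congr_of_eventuallyEq hg

theorem identricMean_of_ne {a b : ℝ} (h : a ≠ b) :
    identricMean a b = exp ((b * log b - a * log a) / (b - a) - 1) := by
  rw [identricMean, if_neg h, ← exp_add]
  ring_nf

theorem log_identricMean {a b : ℝ} (h : a ≠ b) :
    log (identricMean a b) = (b * log b - a * log a) / (b - a) - 1 := by
  rw [identricMean_of_ne h, log_exp]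

theorem identricMean_comm (a b : ℝ) : identricMean a b = identricMean b a := by
  rcases eq_or_ne a b with rfl | h
  · rfl
  · rw [identricMean_of_ne h, identricMean_of_ne h.symm, ← neg_div_neg_eq]
    ring_nf

theorem identricMean_pos {a b : ℝ} (ha : 0 < a) : 0 < identricMean a b := by
  rw [identricMean]
  split_ifs
  · exact ha
  · positivity

theorem identricMean_lt_left {a b : ℝ} (hb : 0 < b) (hba : b < a) : identricMean a b < a := by
  have ha : 0 < a := hb.trans hba
  rw [← log_lt_log_iff (identricMean_pos ha) ha, identricMean_comm, log_identricMean hba.ne,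
    sub_lt_iff_lt_add, div_lt_iff₀ (sub_pos.2 hba)]
  have hlog : log (a / b) < a / b - 1 :=
    log_lt_sub_one_of_pos (div_pos ha hb) (div_ne_one_of_ne hba.ne')
  rw [log_div ha.ne' hb.ne'] at hlog
  have := mul_lt_mul_of_pos_left hlog hb
  rw [mul_sub, mul_sub, mul_div_cancel₀ _ hb.ne', mul_one] at this
  nlinarith

theorem mul_exp_neg_one_lt_identricMean {a b : ℝ} (hb : 0 < b) (hba : b < a) :
    a * exp (-1) < identricMean a b := by
  have ha : 0 < a := hb.trans hba
  rw [← log_lt_log_iff (by positivity) (identricMean_pos ha), log_mul ha.ne' (exp_pos _).ne',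
    log_exp, identricMean_comm, log_identricMean hba.ne, ← sub_eq_add_neg, sub_lt_sub_iff_right,
    lt_div_iff₀ (sub_pos.2 hba)]
  nlinarith [mul_lt_mul_of_pos_left (log_lt_log hb hba) hb]

theorem hasStrictDerivAt_identricMean {a b : ℝ} (hb : b ≠ 0) (hab : a ≠ b) :
    HasStrictDerivAt (identricMean a)
      (identricMean a b * (log b - log (identricMean a b)) / (b - a)) b := by
  have hba : b - a ≠ 0 := sub_ne_zero.2 hab.symm
  have hL : HasStrictDerivAt (fun x => (x * log x - a * log a) / (x - a) - 1)
      ((log b - log (identricMean a b)) / (b - a)) b := by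
    have := ((((hasStrictDerivAt_id b).mul (hasStrictDerivAt_log hb)).sub
      (hasStrictDerivAt_const b (a * log a))).div
      ((hasStrictDerivAt_id b).sub (hasStrictDerivAt_const b a)) hba).sub
      (hasStrictDerivAt_const b 1)
    refine this.congr_deriv ?_
    rw [log_identricMean hab]
    simp only [id, Pi.sub_apply, Pi.mul_apply]
    field_simp
    ring
  have hI : (fun x => exp ((x * log x - a * log a) / (x - a) - 1)) =ᶠ[𝓝 b] identricMean a := by
    filter_upwards [eventually_ne_nhds hab.symm] with x hx
    rw [identricMean_of_ne hx.symm]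
  have := hL.exp.congr_of_eventuallyEq hI
  rwa [← identricMean_of_ne hab, ← mul_div_assoc] at this

theorem exists_identricMean_eq {b y : ℝ} (hb : 0 < b) (hby : b < y) :
    ∃ a, y ≤ a ∧ identricMean a b = y := by
  have hy : 0 < y := hb.trans hby
  have hye : y < y * exp 1 := lt_mul_right hy (one_lt_exp_iff.2 one_pos)
  have hcont : ContinuousOn (identricMean · b) (Set.Icc y (y * exp 1)) := by
    have : ContinuousOn (fun x => exp ((b * log b - x * log x) / (b - x) - 1))
        (Set.Icc y (y * exp 1)) :=
      (((continuous_const.sub continuous_mul_log).continuousOn.div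
        (continuous_const.sub continuous_id).continuousOn
        fun x hx => sub_ne_zero.2 (hby.trans_le hx.1).ne).sub continuousOn_const).rexp
    refine this.congr fun x hx => ?_
    rw [identricMean_of_ne (hby.trans_le hx.1).ne']
  have hlow : identricMean y b ≤ y := (identricMean_lt_left hb hby).le
  have hhigh : y ≤ identricMean (y * exp 1) b := by
    have := mul_exp_neg_one_lt_identricMean hb (hby.trans hye)
    rw [mul_assoc, ← exp_add, add_neg_cancel, exp_zero, mul_one] at this
    exact this.le
  obtain ⟨a, ha, hIa⟩ := intermediate_value_Icc hye.le hcont ⟨hlow, hhigh⟩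
  exact ⟨a, ha.1, hIa⟩

section MeanValueEquation

variable {f : ℝ → ℝ}

theorem deriv_sub_deriv_eq_of_lt
    (hdiff : ∀ x ∈ Set.Ioi (0 : ℝ), DifferentiableAt ℝ f x)
    (hfde : ∀ a ∈ Set.Ioi (0 : ℝ), ∀ b ∈ Set.Ioi (0 : ℝ),
      f b - f a = (b - a) * deriv f (identricMean a b))
    {b y : ℝ} (hb : 0 < b) (hby : b < y) :
    deriv f b - deriv f y = deriv (deriv f) y * y * (log b - log y) := by
  obtain ⟨a, hya, hIa⟩ := exists_identricMean_eq hb hby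
  have hy : y ≠ 0 := (hb.trans hby).ne'
  have ha : 0 < a := hb.trans (hby.trans_le hya)
  have hba : b - a ≠ 0 := by linarith
  have hlog : log b - log y ≠ 0 := (sub_neg.2 (log_lt_log hb hby)).ne
  have hI := hasStrictDerivAt_identricMean hb.ne' (hby.trans_le hya).ne'
  rw [hIa] at hI
  have hq : HasDerivAt (fun x => (f x - f a) / (x - a))
      ((deriv f b * (b - a) - (f b - f a) * 1) / (b - a) ^ 2) b :=
    ((hdiff b hb).hasDerivAt.sub_const (f a)).div ((hasDerivAt_id b).sub_const a) hba
  have hquot : ∀ᶠ x in 𝓝 b, deriv f (identricMean a x) = (f x - f a) / (x - a) := by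
    filter_upwards [lt_mem_nhds hb, eventually_ne_nhds (hby.trans_le hya).ne] with x hx hxa
    rw [hfde a ha x hx, mul_div_cancel_left₀ _ (sub_ne_zero.2 hxa)]
  have hf'' :=
    hI.hasDerivAt_of_comp_eventuallyEq (div_ne_zero (mul_ne_zero hy hlog) hba) hq hquot
  rw [hIa] at hf''
  rw [hf''.deriv, hfde a ha b hb, hIa]
  field_simp

theorem deriv_deriv_mul_eq
    (hdiff : ∀ x ∈ Set.Ioi (0 : ℝ), DifferentiableAt ℝ f x)
    (hfde : ∀ a ∈ Set.Ioi (0 : ℝ), ∀ b ∈ Set.Ioi (0 : ℝ),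
      f b - f a = (b - a) * deriv f (identricMean a b))
    {y z : ℝ} (hy : 0 < y) (hz : 0 < z) :
    deriv (deriv f) y * y = deriv (deriv f) z * z := by
  set m := min y z
  have hm : 0 < m := lt_min hy hz
  have hmy : m ≤ y := min_le_left y z
  have hmz : m ≤ z := min_le_right y z
  have hlog : log (m / 4) - log (m / 2) ≠ 0 :=
    (sub_neg.2 (log_lt_log (by positivity) (by linarith))).ne
  have ey₁ := deriv_sub_deriv_eq_of_lt hdiff hfde (b := m / 2) (by positivity)
    (by linarith : m / 2 < y)
  have ey₂ := deriv_sub_deriv_eq_of_lt hdiff hfde (b := m / 4) (by positivity)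
    (by linarith : m / 4 < y)
  have ez₁ := deriv_sub_deriv_eq_of_lt hdiff hfde (b := m / 2) (by positivity)
    (by linarith : m / 2 < z)
  have ez₂ := deriv_sub_deriv_eq_of_lt hdiff hfde (b := m / 4) (by positivity)
    (by linarith : m / 4 < z)
  exact mul_right_cancel₀ hlog (by linear_combination ey₁ - ey₂ - ez₁ + ez₂ :
    deriv (deriv f) y * y * (log (m / 4) - log (m / 2)) =
      deriv (deriv f) z * z * (log (m / 4) - log (m / 2)))

theorem deriv_eq_add_mul_log
    (hdiff : ∀ x ∈ Set.Ioi (0 : ℝ), DifferentiableAt ℝ f x)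
    (hfde : ∀ a ∈ Set.Ioi (0 : ℝ), ∀ b ∈ Set.Ioi (0 : ℝ),
      f b - f a = (b - a) * deriv f (identricMean a b))
    {y : ℝ} (hy : 0 < y) :
    deriv f y = deriv f 1 + deriv (deriv f) 1 * log y := by
  set m := min y 1
  have hm : 0 < m := lt_min hy one_pos
  have hy' := deriv_sub_deriv_eq_of_lt hdiff hfde (b := m / 2) (by positivity)
    (by linarith [min_le_left y 1] : m / 2 < y)
  have h1 := deriv_sub_deriv_eq_of_lt hdiff hfde (b := m / 2) (by positivity)
    (by linarith [min_le_right y 1] : m / 2 < 1)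
  rw [deriv_deriv_mul_eq hdiff hfde hy one_pos] at hy'
  rw [log_one] at h1
  linear_combination h1 - hy'

end MeanValueEquation

theorem stmt_2 (f : ℝ → ℝ)
    (hdiff : ∀ x ∈ Set.Ioi (0 : ℝ), DifferentiableAt ℝ f x)
    (hfde : ∀ a ∈ Set.Ioi (0 : ℝ), ∀ b ∈ Set.Ioi (0 : ℝ),
      f b - f a = (b - a) * deriv f (identricMean a b)) :
    ∃ c₁ c₂ c₃ : ℝ, ∀ x ∈ Set.Ioi (0 : ℝ), f x = c₁ * x * Real.log x + c₂ * x + c₃ := by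
  set A := deriv f 1
  set B := deriv (deriv f) 1
  refine ⟨B, A - B, f 1 - (A - B), fun x (hx : 0 < x) => ?_⟩
  rcases eq_or_ne x 1 with rfl | hx1
  · simp
  have hmvt := hfde 1 (Set.mem_Ioi.2 one_pos) x hx
  rw [deriv_eq_add_mul_log hdiff hfde (identricMean_pos one_pos), log_identricMean hx1.symm,
    log_one, mul_zero, sub_zero] at hmvt
  have hx1' : x - 1 ≠ 0 := sub_ne_zero.2 hx1
  field_simp at hmvt
  linear_combination hmvt
end

section
/- Let f : (0,∞) → ℝ be a differentiable function such that f(b) - f(a) = (b - a)·f'(√(ab)) for all a, b > 0. Then there exist constants c₁, c₂, c₃ ∈ ℝ such that f(x) = c₁/x + c₂·x + c₃ for all x > 0. -/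
theorem stmt_3 (f : ℝ → ℝ)
    (hdiff : ∀ x ∈ Set.Ioi (0 : ℝ), DifferentiableAt ℝ f x)
    (hfde : ∀ a ∈ Set.Ioi (0 : ℝ), ∀ b ∈ Set.Ioi (0 : ℝ),
      f b - f a = (b - a) * deriv f (Real.sqrt (a * b))) :
    ∃ c₁ c₂ c₃ : ℝ, ∀ x ∈ Set.Ioi (0 : ℝ), f x = c₁ / x + c₂ * x + c₃ := by
  set K : ℝ → ℝ := fun t => deriv f (Real.sqrt t) with hK
  have hfde' : ∀ a > (0:ℝ), ∀ b > (0:ℝ), f b - f a = (b - a) * K (a * b) := by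
    intro a ha b hb
    exact hfde a ha b hb
  have h1 : ∀ b > (0:ℝ), f b = f 1 + (b - 1) * K b := by
    intro b hb
    have h := hfde' 1 one_pos b hb
    rw [one_mul] at h
    linarith
  have hH : ∀ a > (0:ℝ), ∀ b > (0:ℝ),
      (b - 1) * K b - (a - 1) * K a = (b - a) * K (a * b) := by
    intro a ha b hb
    have h := hfde' a ha b hb
    rw [h1 a ha, h1 b hb] at h
    linarith
  have h2 : ∀ a > (0:ℝ), a ≠ 1 → K (1 / a) + a * K a = (1 + a) * K 1 := by
    intro a ha hne
    have h := hH a ha (1 / a) (by positivity)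
    rw [mul_one_div_cancel (ne_of_gt ha)] at h
    have ha' : a ≠ 0 := ne_of_gt ha
    have h1a : (1:ℝ) - a ≠ 0 := sub_ne_zero.mpr (Ne.symm hne)
    have h' : (1 - a) * (K (1/a) + a * K a) = (1 - a) * ((1 + a) * K 1) := by
      field_simp at h
      ring_nf at h ⊢
      linarith
    exact mul_left_cancel₀ h1a h'
  have hE : ∀ a > (0:ℝ), a ≠ 1 → ∀ t > (0:ℝ),
      a^2 * (t - 1) * K (a^2 * t) + (a^2 - 1) * K 1 = (a^2 * t - 1) * K t := by
    intro a ha hne t ht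
    have ha' : a ≠ 0 := ne_of_gt ha
    have hab := hH a ha (a * t) (by positivity)
    have hinv := hH (1/a) (by positivity) (a * t) (by positivity)
    have e1 : a * (a * t) = a^2 * t := by ring
    have e2 : (1/a) * (a * t) = t := by field_simp
    rw [e1] at hab
    rw [e2] at hinv
    have h2a := h2 a ha hne
    field_simp at hinv
    linear_combination hinv - a * hab + (1 - a) * h2a
  have hKform : ∀ x > (0:ℝ), x * K x = 2 * (x - 1) * K 2 - (x - 2) * K 1 := by
    intro x hx
    by_cases hx2 : x = 2
    · subst hx2; ring
    · set a := Real.sqrt (x / 2) with hadef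
      have ha2 : a^2 = x / 2 := Real.sq_sqrt (by linarith)
      have ha : a > 0 := Real.sqrt_pos.mpr (by linarith)
      have hane : a ≠ 1 := by
        intro h
        rw [h] at ha2
        norm_num at ha2
        exact hx2 (by linarith)
      have h := hE a ha hane 2 two_pos
      have e3 : a^2 * 2 = x := by rw [ha2]; ring
      rw [e3] at h
      rw [ha2] at h
      linarith
  refine ⟨2 * K 2 - 2 * K 1, 2 * K 2 - K 1, f 1 + 3 * K 1 - 4 * K 2, ?_⟩
  intro x hx
  have hx0 : (0:ℝ) < x := hx
  have hx' : x ≠ 0 := ne_of_gt hx0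
  rw [h1 x hx0]
  have hkx := hKform x hx0
  field_simp
  ring_nf
  nlinarith [hkx]
end

section
/- Let α ∈ ℝ with α ≠ 0 and α ≠ 1. Every differentiable function f : (0,∞) → ℝ satisfying f(b) - f(a) = (b - a)·f'(S_α(a,b)) for all a, b > 0 is infinitely differentiable on (0,∞). -/
namespace StolarskyProof
open Set Filter Real
open scoped ContDiff Topology

section
variable {α : ℝ}

lemma stolarsky_of_ne {a b : ℝ} (hab : a ≠ b) :
    stolarsky α a b = ((b ^ α - a ^ α) / (α * (b - a))) ^ (1 / (α - 1)) := if_neg hab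

lemma stolarsky_comm (a b : ℝ) : stolarsky α a b = stolarsky α b a := by
  rcases eq_or_ne a b with rfl | hab
  · rfl
  · rw [stolarsky_of_ne hab, stolarsky_of_ne hab.symm]
    congr 1
    rw [show a ^ α - b ^ α = -(b ^ α - a ^ α) by ring,
      show α * (a - b) = -(α * (b - a)) by ring, neg_div_neg_eq]

lemma rpow_base_lt {s t p : ℝ} (hs : 0 < s) (hst : s < t) :
    (0 < p → s ^ p < t ^ p) ∧ (p < 0 → t ^ p < s ^ p) :=
  ⟨fun h => Real.rpow_lt_rpow hs.le hst h,
   fun h => Real.rpow_lt_rpow_of_neg hs hst h⟩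

lemma rpow_base_inj {s t p : ℝ} (hp : p ≠ 0) (hs : 0 < s) (ht : 0 < t)
    (h : s ^ p = t ^ p) : s = t := by
  rcases lt_trichotomy s t with hlt | he | hlt
  · rcases hp.lt_or_gt with hneg | hpos
    · exact absurd h (ne_of_gt ((rpow_base_lt hs hlt).2 hneg))
    · exact absurd h (ne_of_lt ((rpow_base_lt hs hlt).1 hpos))
  · exact he
  · rcases hp.lt_or_gt with hneg | hpos
    · exact absurd h (ne_of_lt ((rpow_base_lt ht hlt).2 hneg))
    · exact absurd h (ne_of_gt ((rpow_base_lt ht hlt).1 hpos))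

variable (hα0 : α ≠ 0) (hα1 : α ≠ 1)
include hα0

lemma q_pos {a b : ℝ} (ha : 0 < a) (hb : 0 < b) (hab : a ≠ b) :
    0 < (b ^ α - a ^ α) / (α * (b - a)) := by
  rcases hab.lt_or_gt with h | h
  · rcases hα0.lt_or_gt with hneg | hpos
    · apply div_pos_of_neg_of_neg
      · simpa [sub_neg] using (rpow_base_lt ha h).2 hneg
      · exact mul_neg_of_neg_of_pos hneg (by linarith)
    · apply div_pos
      · simpa [sub_pos] using (rpow_base_lt ha h).1 hpos
      · exact mul_pos hpos (by linarith)
  · rcases hα0.lt_or_gt with hneg | hpos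
    · apply div_pos
      · simpa [sub_pos] using (rpow_base_lt hb h).2 hneg
      · exact mul_pos_of_neg_of_neg hneg (by linarith)
    · apply div_pos_of_neg_of_neg
      · simpa [sub_neg] using (rpow_base_lt hb h).1 hpos
      · exact mul_neg_of_pos_of_neg hpos (by linarith)

include hα1

lemma stolarsky_mem_Ioo {a b : ℝ} (ha : 0 < a) (hab : a < b) :
    stolarsky α a b ∈ Ioo a b := by
  have hβ : α - 1 ≠ 0 := sub_ne_zero.2 hα1
  obtain ⟨c, hc, hc'⟩ := exists_hasDerivAt_eq_slope (fun t => t ^ α)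
    (fun t => α * t ^ (α - 1)) hab
    (by
      apply ContinuousOn.rpow_const continuousOn_id
      intro t ht
      exact Or.inl (by rw [id]; exact (lt_of_lt_of_le ha ht.1).ne'))
    (fun t ht => Real.hasDerivAt_rpow_const (Or.inl (ha.trans ht.1).ne'))
  have hcpos : 0 < c := ha.trans hc.1
  have hq : (b ^ α - a ^ α) / (α * (b - a)) = c ^ (α - 1) := by
    rw [mul_comm α (b - a), ← div_div, ← hc', mul_comm, mul_div_assoc,
      div_self hα0, mul_one]
  have : stolarsky α a b = c := by
    rw [stolarsky_of_ne hab.ne, hq, one_div, ← Real.rpow_mul hcpos.le,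
      mul_inv_cancel₀ hβ, Real.rpow_one]
  rw [this]; exact hc

lemma stolarsky_pos {a b : ℝ} (ha : 0 < a) (hb : 0 < b) : 0 < stolarsky α a b := by
  rcases lt_trichotomy a b with h | rfl | h
  · exact ha.trans (stolarsky_mem_Ioo hα0 hα1 ha h).1
  · simpa [stolarsky] using ha
  · rw [stolarsky_comm]
    exact hb.trans (stolarsky_mem_Ioo hα0 hα1 hb h).1

lemma stolarsky_ne {a b : ℝ} (ha : 0 < a) (hb : 0 < b) (hab : a ≠ b) :
    stolarsky α a b ≠ a ∧ stolarsky α a b ≠ b := by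
  rcases hab.lt_or_gt with h | h
  · obtain ⟨h1, h2⟩ := stolarsky_mem_Ioo hα0 hα1 ha h
    exact ⟨h1.ne', h2.ne⟩
  · rw [stolarsky_comm]
    obtain ⟨h1, h2⟩ := stolarsky_mem_Ioo hα0 hα1 hb h
    exact ⟨h2.ne, h1.ne'⟩

lemma stol_hasDerivAt {a b : ℝ} (ha : 0 < a) (hb : 0 < b) (hab : a ≠ b) :
    HasDerivAt (fun t => stolarsky α a t)
      ((b ^ (α - 1) - (stolarsky α a b) ^ (α - 1)) /
        ((α - 1) * (stolarsky α a b) ^ (α - 2) * (b - a))) b := by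
  have hβ : α - 1 ≠ 0 := sub_ne_zero.2 hα1
  set x := stolarsky α a b with hx
  have hqpos : 0 < (b ^ α - a ^ α) / (α * (b - a)) := q_pos hα0 ha hb hab
  have hxq : x = ((b ^ α - a ^ α) / (α * (b - a))) ^ (1 / (α - 1)) := stolarsky_of_ne hab
  have hxpos : 0 < x := hxq ▸ Real.rpow_pos_of_pos hqpos _
  have hxpow : x ^ (α - 1) = (b ^ α - a ^ α) / (α * (b - a)) := by
    rw [hxq, one_div, ← Real.rpow_mul hqpos.le, inv_mul_cancel₀ hβ, Real.rpow_one]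
  have hnum : HasDerivAt (fun t : ℝ => t ^ α - a ^ α) (α * b ^ (α - 1)) b := by
    simpa using (Real.hasDerivAt_rpow_const (p := α) (Or.inl hb.ne')).sub_const (a ^ α)
  have hden : HasDerivAt (fun t : ℝ => α * (t - a)) α b := by
    simpa using ((hasDerivAt_id b).sub_const a).const_mul α
  have hden0 : α * (b - a) ≠ 0 := mul_ne_zero hα0 (sub_ne_zero.2 (Ne.symm hab))
  have hq : HasDerivAt (fun t : ℝ => (t ^ α - a ^ α) / (α * (t - a)))
      ((α * b ^ (α - 1) * (α * (b - a)) - (b ^ α - a ^ α) * α) / (α * (b - a)) ^ 2) b :=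
    hnum.div hden hden0
  have hout : HasDerivAt (fun y : ℝ => y ^ (1 / (α - 1)))
      ((1 / (α - 1)) * ((b ^ α - a ^ α) / (α * (b - a))) ^ (1 / (α - 1) - 1))
      ((b ^ α - a ^ α) / (α * (b - a))) :=
    Real.hasDerivAt_rpow_const (Or.inl hqpos.ne')
  have hcomp := hout.comp b hq
  have heq : (fun t => stolarsky α a t) =ᶠ[nhds b]
      ((fun y : ℝ => y ^ (1 / (α - 1))) ∘ fun t : ℝ => (t ^ α - a ^ α) / (α * (t - a))) := by
    filter_upwards [isOpen_ne.mem_nhds (Ne.symm hab)] with t ht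
    exact stolarsky_of_ne (Ne.symm ht)
  refine (hcomp.congr_of_eventuallyEq heq).congr_deriv ?_
  have h1 : ((b ^ α - a ^ α) / (α * (b - a))) ^ (1 / (α - 1) - 1) = x / (x ^ (α - 1)) := by
    rw [← hxpow, ← Real.rpow_mul hxpos.le,
      show (α - 1) * (1 / (α - 1) - 1) = 1 - (α - 1) by field_simp,
      Real.rpow_sub hxpos, Real.rpow_one]
  have h2 : x ^ (α - 2) = x ^ (α - 1) / x := by
    rw [show α - 2 = (α - 1) - 1 by ring, Real.rpow_sub hxpos, Real.rpow_one]
  have hba : b ^ α - a ^ α = x ^ (α - 1) * (α * (b - a)) := by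
    rw [hxpow]; field_simp
  have hP : (0:ℝ) < x ^ (α - 1) := Real.rpow_pos_of_pos hxpos _
  rw [h1, h2, hba]
  have hd : b - a ≠ 0 := sub_ne_zero.2 (Ne.symm hab)
  field_simp

lemma stol_deriv_ne_zero {a b : ℝ} (ha : 0 < a) (hb : 0 < b) (hab : a ≠ b) :
    (b ^ (α - 1) - (stolarsky α a b) ^ (α - 1)) /
      ((α - 1) * (stolarsky α a b) ^ (α - 2) * (b - a)) ≠ 0 := by
  have hβ : α - 1 ≠ 0 := sub_ne_zero.2 hα1
  have hxpos : 0 < stolarsky α a b := stolarsky_pos hα0 hα1 ha hb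
  have hxb : stolarsky α a b ≠ b := (stolarsky_ne hα0 hα1 ha hb hab).2
  apply div_ne_zero
  · intro h
    exact hxb (rpow_base_inj hβ hxpos hb (by linarith [sub_eq_zero.1 h]))
  · exact mul_ne_zero (mul_ne_zero hβ (Real.rpow_pos_of_pos hxpos _).ne')
      (sub_ne_zero.2 (Ne.symm hab))

lemma stol_contDiffAt {a b : ℝ} (ha : 0 < a) (hb : 0 < b) (hab : a ≠ b) :
    ContDiffAt ℝ ((⊤ : ℕ∞) : WithTop ℕ∞) (fun t => stolarsky α a t) b := by
  have hqpos : 0 < (b ^ α - a ^ α) / (α * (b - a)) := q_pos hα0 ha hb hab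
  have hden0 : α * (b - a) ≠ 0 := mul_ne_zero hα0 (sub_ne_zero.2 (Ne.symm hab))
  have hinner : ContDiffAt ℝ ((⊤ : ℕ∞) : WithTop ℕ∞)
      (fun t : ℝ => (t ^ α - a ^ α) / (α * (t - a))) b := by
    apply ContDiffAt.div
    · exact (Real.contDiffAt_rpow_const_of_ne hb.ne').sub contDiffAt_const
    · exact contDiffAt_const.mul (contDiffAt_id.sub contDiffAt_const)
    · exact hden0
  have houter : ContDiffAt ℝ ((⊤ : ℕ∞) : WithTop ℕ∞)
      (fun y : ℝ => y ^ (1 / (α - 1))) ((b ^ α - a ^ α) / (α * (b - a))) :=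
    Real.contDiffAt_rpow_const_of_ne hqpos.ne'
  refine (houter.comp b hinner).congr_of_eventuallyEq ?_
  filter_upwards [isOpen_ne.mem_nhds (Ne.symm hab)] with t ht
  exact stolarsky_of_ne (Ne.symm ht)

lemma stolarsky_homog {l a b : ℝ} (hl : 0 < l) (ha : 0 < a) (hb : 0 < b) :
    stolarsky α (l * a) (l * b) = l * stolarsky α a b := by
  have hβ : α - 1 ≠ 0 := sub_ne_zero.2 hα1
  rcases eq_or_ne a b with rfl | hab
  · simp [stolarsky]
  have hab' : l * a ≠ l * b := by
    intro h; exact hab (mul_left_cancel₀ hl.ne' h)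
  rw [stolarsky_of_ne hab', stolarsky_of_ne hab]
  have h1 : (l * b) ^ α = l ^ α * b ^ α := Real.mul_rpow hl.le hb.le
  have h2 : (l * a) ^ α = l ^ α * a ^ α := Real.mul_rpow hl.le ha.le
  have hq : ((l * b) ^ α - (l * a) ^ α) / (α * (l * b - l * a)) =
      l ^ (α - 1) * ((b ^ α - a ^ α) / (α * (b - a))) := by
    rw [h1, h2, Real.rpow_sub hl, Real.rpow_one]
    have h3 : α * (l * b - l * a) = l * (α * (b - a)) := by ring
    rw [h3]
    field_simp
  rw [hq, Real.mul_rpow (Real.rpow_pos_of_pos hl _).le (q_pos hα0 ha hb hab).le,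
    ← Real.rpow_mul hl.le, mul_one_div, div_self hβ, Real.rpow_one]


/-- The local inverse package: near any `x₀ > 0` there is a fixed `B` and a smooth map `ψ`
with `stolarsky α B (ψ x) = x`. -/
lemma exists_inverse {x₀ : ℝ} (hx₀ : 0 < x₀) :
    ∃ B ψ, 0 < B ∧ x₀ < B ∧ ContDiffAt ℝ ∞ ψ x₀ ∧
      ∀ᶠ x in 𝓝 x₀, (0 < ψ x ∧ ψ x ≠ B ∧ ψ x ≠ x ∧ x ≠ B ∧ 0 < x) ∧
        stolarsky α B (ψ x) = x := by
  have hc₀ : stolarsky α 1 2 ∈ Ioo (1:ℝ) 2 :=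
    stolarsky_mem_Ioo hα0 hα1 one_pos one_lt_two
  set c₀ := stolarsky α 1 2 with hc₀def
  have hc₀pos : 0 < c₀ := lt_trans one_pos hc₀.1
  set a₀ := x₀ / c₀ with ha₀def
  have ha₀pos : 0 < a₀ := div_pos hx₀ hc₀pos
  set B := 2 * a₀ with hBdef
  have hBpos : 0 < B := by rw [hBdef]; positivity
  have hBa : B ≠ a₀ := by rw [hBdef]; intro h; nlinarith
  have haB : a₀ < B := by rw [hBdef]; linarith
  have hSB : stolarsky α B a₀ = x₀ := by
    rw [stolarsky_comm, hBdef, show a₀ = a₀ * 1 by ring, show 2 * (a₀ * 1) = a₀ * 2 by ring,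
      stolarsky_homog hα0 hα1 ha₀pos one_pos two_pos, ← hc₀def, ha₀def]
    field_simp
  have ha₀x : a₀ < x₀ := by
    rw [ha₀def, div_lt_iff₀ hc₀pos]; nlinarith [hc₀.1]
  have hxB : x₀ < B := by
    rw [hBdef, ha₀def, show 2 * (x₀ / c₀) = 2 * x₀ / c₀ by ring, lt_div_iff₀ hc₀pos]
    nlinarith [hc₀.2]
  clear_value c₀ a₀ B
  clear hc₀def ha₀def hBdef hc₀ hc₀pos
  -- the map to invert
  have hD := stol_hasDerivAt hα0 hα1 hBpos ha₀pos hBa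
  have hD0 := stol_deriv_ne_zero hα0 hα1 hBpos ha₀pos hBa
  have hΦ : ContDiffAt ℝ ∞ (fun t => stolarsky α B t) a₀ :=
    stol_contDiffAt hα0 hα1 hBpos ha₀pos hBa
  have hn : (1 : WithTop ℕ∞) ≤ ∞ := by exact_mod_cast (le_top : (1:ℕ∞) ≤ ⊤)
  have hfd := hD.hasFDerivAt_equiv hD0
  set ψ := hΦ.localInverse hfd (by simp) with hψdef
  have hstrict := hΦ.hasStrictFDerivAt' hfd (by simp)
  have hψcd : ContDiffAt ℝ ∞ ψ x₀ := by
    rw [← hSB]; exact hΦ.to_localInverse hfd (by simp)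
  have hri : ∀ᶠ y in 𝓝 x₀, (fun t => stolarsky α B t) (ψ y) = y := by
    rw [← hSB]; exact hstrict.eventually_right_inverse
  have hcont : ContinuousAt ψ x₀ := by
    rw [← hSB]; exact hstrict.localInverse_continuousAt
  have hval : ψ x₀ = a₀ := by
    rw [← hSB]; exact hΦ.localInverse_apply_image hfd (by simp)
  refine ⟨B, ψ, hBpos, hxB, hψcd, ?_⟩
  have e1 : ∀ᶠ x in 𝓝 x₀, 0 < ψ x :=
    hcont.eventually ((hval ▸ eventually_gt_nhds ha₀pos : ∀ᶠ y in 𝓝 (ψ x₀), 0 < y))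
  have e2 : ∀ᶠ x in 𝓝 x₀, ψ x < B :=
    hcont.eventually ((hval ▸ eventually_lt_nhds haB : ∀ᶠ y in 𝓝 (ψ x₀), y < B))
  have e3 : ∀ᶠ x in 𝓝 x₀, ψ x < x := by
    have hcont2 : ContinuousAt (fun x => x - ψ x) x₀ := continuousAt_id.sub hcont
    have hgt : (0:ℝ) < x₀ - ψ x₀ := by rw [hval]; linarith
    filter_upwards [hcont2.eventually (eventually_gt_nhds hgt)] with x hx
    · simpa [sub_pos] using hx
  have e4 : ∀ᶠ x in 𝓝 x₀, x < B := eventually_lt_nhds hxB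
  have e5 : ∀ᶠ x in 𝓝 x₀, 0 < x := eventually_gt_nhds hx₀
  filter_upwards [e1, e2, e3, e4, e5, hri] with x h1 h2 h3 h4 h5 h6
  exact ⟨⟨h1, h2.ne, h3.ne, h4.ne, h5⟩, h6⟩

omit hα0 hα1 in
lemma const_of_deriv0 {u : ℝ → ℝ} (hu : ∀ x ∈ Ioi (0:ℝ), HasDerivAt u 0 x) :
    ∀ x ∈ Ioi (0:ℝ), u x = u 1 := by
  intro x hx
  apply (convex_Ioi (0:ℝ)).is_const_of_fderivWithin_eq_zero (𝕜 := ℝ)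
    (fun y hy => (hu y hy).differentiableAt.differentiableWithinAt) ?_ hx (mem_Ioi.2 one_pos)
  intro y hy
  rw [fderivWithin_of_isOpen isOpen_Ioi hy, (hu y hy).hasFDerivAt.fderiv]
  exact ContinuousLinearMap.ext fun z => by simp



variable {f : ℝ → ℝ} (hdiff : ∀ x ∈ Set.Ioi (0 : ℝ), DifferentiableAt ℝ f x)
    (hfde : ∀ a ∈ Set.Ioi (0 : ℝ), ∀ b ∈ Set.Ioi (0 : ℝ),
      f b - f a = (b - a) * deriv f (stolarsky α a b))
include hdiff hfde

lemma deriv_eventually_eq {x₀ : ℝ} (hx₀ : 0 < x₀) :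
    ∃ B ψ, 0 < B ∧ x₀ < B ∧ ContDiffAt ℝ ∞ ψ x₀ ∧ 0 < ψ x₀ ∧ ψ x₀ ≠ B ∧
      deriv f =ᶠ[𝓝 x₀] fun x => (f (ψ x) - f B) / (ψ x - B) := by
  obtain ⟨B, ψ, hB, hxB, hψ, hev⟩ := exists_inverse hα0 hα1 hx₀
  have hself := hev.self_of_nhds
  refine ⟨B, ψ, hB, hxB, hψ, hself.1.1, hself.1.2.1, ?_⟩
  filter_upwards [hev] with x ⟨⟨h1, h2, h3, h4, h5⟩, h6⟩
  have := hfde B (mem_Ioi.2 hB) (ψ x) (mem_Ioi.2 h1)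
  rw [h6] at this
  rw [eq_div_iff (sub_ne_zero.2 h2), this]; ring

lemma f_contDiffOn_nat : ∀ n : ℕ, ContDiffOn ℝ (n : WithTop ℕ∞) f (Ioi 0) := by
  intro n
  induction n with
  | zero =>
    rw [Nat.cast_zero, contDiffOn_zero]
    exact fun x hx => (hdiff x hx).continuousAt.continuousWithinAt
  | succ n ih =>
    rw [show ((n + 1 : ℕ) : WithTop ℕ∞) = (n : WithTop ℕ∞) + 1 by push_cast; rfl,
      contDiffOn_succ_iff_deriv_of_isOpen isOpen_Ioi]
    refine ⟨fun x hx => (hdiff x hx).differentiableWithinAt, ?_, ?_⟩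
    · intro h; simp at h
    · intro x₀ hx₀
      obtain ⟨B, ψ, hB, hxB, hψ, hψ0, hψB, heq⟩ :=
        deriv_eventually_eq hα0 hα1 hdiff hfde (mem_Ioi.1 hx₀)
      have hfψ : ContDiffAt ℝ (n : WithTop ℕ∞) f (ψ x₀) :=
        ih.contDiffAt (Ioi_mem_nhds hψ0)
      have hψn : ContDiffAt ℝ (n : WithTop ℕ∞) ψ x₀ := hψ.of_le (by exact_mod_cast le_top)
      have hnum : ContDiffAt ℝ (n : WithTop ℕ∞) (fun x => f (ψ x) - f B) x₀ :=
        (hfψ.comp x₀ hψn).sub contDiffAt_const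
      have hden : ContDiffAt ℝ (n : WithTop ℕ∞) (fun x => ψ x - B) x₀ :=
        hψn.sub contDiffAt_const
      have : ContDiffAt ℝ (n : WithTop ℕ∞) (fun x => (f (ψ x) - f B) / (ψ x - B)) x₀ :=
        hnum.div hden (sub_ne_zero.2 hψB)
      exact (this.congr_of_eventuallyEq heq).contDiffWithinAt

lemma f_smooth : ContDiffOn ℝ ∞ f (Ioi 0) := by
  rw [contDiffOn_infty]
  exact fun n => f_contDiffOn_nat hα0 hα1 hdiff hfde n

lemma g_smooth : ContDiffOn ℝ ∞ (deriv f) (Ioi 0) :=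
  ((contDiffOn_infty_iff_deriv_of_isOpen isOpen_Ioi).1
    (f_smooth hα0 hα1 hdiff hfde)).2

/-- The key differentiated identity. -/
lemma key_identity (hg : ∀ x ∈ Ioi (0:ℝ), DifferentiableAt ℝ (deriv f) x)
    {a b : ℝ} (ha : 0 < a) (hb : 0 < b) (hab : a ≠ b) :
    deriv f b - deriv f (stolarsky α a b) =
      deriv (deriv f) (stolarsky α a b) *
        ((b ^ (α - 1) - (stolarsky α a b) ^ (α - 1)) /
          ((α - 1) * (stolarsky α a b) ^ (α - 2))) := by
  set g := deriv f with hgdef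
  set x := stolarsky α a b with hxdef
  have hxpos : 0 < x := stolarsky_pos hα0 hα1 ha hb
  set D := (b ^ (α - 1) - x ^ (α - 1)) / ((α - 1) * x ^ (α - 2) * (b - a)) with hDdef
  have hΦ : HasDerivAt (fun t => stolarsky α a t) D b := stol_hasDerivAt hα0 hα1 ha hb hab
  have hgx : HasDerivAt g (deriv g x) x := (hg x hxpos).hasDerivAt
  have hRHS : HasDerivAt (fun t => (t - a) * g (stolarsky α a t))
      (1 * g x + (b - a) * (deriv g x * D)) b := by
    have h1 : HasDerivAt (fun t : ℝ => t - a) 1 b := (hasDerivAt_id b).sub_const a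
    have h2 : HasDerivAt (fun t => g (stolarsky α a t)) (deriv g x * D) b := by
      exact hgx.comp b hΦ
    exact h1.mul h2
  have hev : (fun t => f t - f a) =ᶠ[𝓝 b] (fun t => (t - a) * g (stolarsky α a t)) := by
    filter_upwards [Ioi_mem_nhds hb] with t ht
    exact hfde a (mem_Ioi.2 ha) t ht
  have hLHS : HasDerivAt (fun t => f t - f a) (deriv f b) b :=
    (hdiff b (mem_Ioi.2 hb)).hasDerivAt.sub_const (f a)
  have huniq : deriv f b = 1 * g x + (b - a) * (deriv g x * D) :=
    hLHS.unique (hRHS.congr_of_eventuallyEq hev)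
  have hM : (α - 1) * x ^ (α - 2) ≠ 0 :=
    mul_ne_zero (sub_ne_zero.2 hα1) (Real.rpow_pos_of_pos hxpos _).ne'
  have hba : b - a ≠ 0 := sub_ne_zero.2 (Ne.symm hab)
  have huniq' : g b = 1 * g x + (b - a) * (deriv g x * D) := huniq
  rw [huniq', hDdef]
  field_simp
  ring

/-- The quantity `deriv (deriv f) x / ((α-1) x^(α-2))` is constant on `(0,∞)`. -/
lemma c_is_const (hg : ∀ x ∈ Ioi (0:ℝ), DifferentiableAt ℝ (deriv f) x) :
    ∀ x ∈ Ioi (0:ℝ),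
      deriv (deriv f) x / ((α - 1) * x ^ (α - 2)) =
      deriv (deriv f) 1 / ((α - 1) * 1 ^ (α - 2)) := by
  set g := deriv f with hgdef
  set c : ℝ → ℝ := fun t => deriv g t / ((α - 1) * t ^ (α - 2)) with hcdef
  have hβ : α - 1 ≠ 0 := sub_ne_zero.2 hα1
  have hc0 : ∀ x₀ ∈ Ioi (0:ℝ), HasDerivAt c 0 x₀ := by
    intro x₀ hx₀'
    have hx₀ : 0 < x₀ := mem_Ioi.1 hx₀'
    obtain ⟨B, ψ, hB, hxB, hψ, hev⟩ := exists_inverse hα0 hα1 hx₀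
    have hM : ∀ {y : ℝ}, 0 < y → (α - 1) * y ^ (α - 2) ≠ 0 := fun hy =>
      mul_ne_zero hβ (Real.rpow_pos_of_pos hy _).ne'
    -- the key identity along the inverse family, with fixed B
    have hkey : ∀ᶠ z in 𝓝 x₀, c z * (B ^ (α - 1) - z ^ (α - 1)) = g B - g z := by
      filter_upwards [hev] with z ⟨⟨h1, h2, h3, h4, h5⟩, h6⟩
      have hz := key_identity hα0 hα1 hdiff hfde hg h1 hB h2
      rw [stolarsky_comm, h6] at hz
      rw [hcdef]
      rw [hz]
      field_simp
      exact mul_comm _ _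
    have hBz : ∀ᶠ z in 𝓝 x₀, B ^ (α - 1) - z ^ (α - 1) ≠ 0 := by
      filter_upwards [eventually_lt_nhds hxB, eventually_gt_nhds hx₀] with z hzB hz0
      intro h
      exact hzB.ne (rpow_base_inj hβ hB (by linarith) (by linarith [sub_eq_zero.1 h])).symm
    -- c is differentiable at x₀
    have hw : DifferentiableAt ℝ (fun z => (g B - g z) / (B ^ (α - 1) - z ^ (α - 1))) x₀ := by
      apply DifferentiableAt.div
      · exact (differentiableAt_const _).sub (hg x₀ hx₀')
      · exact (differentiableAt_const _).sub
          ((Real.hasDerivAt_rpow_const (p := α - 1) (Or.inl hx₀.ne')).differentiableAt)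
      · exact hBz.self_of_nhds
    have hceq : c =ᶠ[𝓝 x₀] fun z => (g B - g z) / (B ^ (α - 1) - z ^ (α - 1)) := by
      filter_upwards [hkey, hBz] with z h1 h2
      rw [eq_div_iff h2, h1]
    have hcdiff : DifferentiableAt ℝ c x₀ := hw.congr_of_eventuallyEq hceq
    have hW : HasDerivAt c (deriv c x₀) x₀ := hcdiff.hasDerivAt
    have hpow : HasDerivAt (fun z : ℝ => z ^ (α - 1)) ((α - 1) * x₀ ^ (α - 2)) x₀ := by
      have := Real.hasDerivAt_rpow_const (p := α - 1) (Or.inl hx₀.ne')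
      simpa [show α - 1 - 1 = α - 2 by ring] using this
    have hprod : HasDerivAt (fun z => c z * (B ^ (α - 1) - z ^ (α - 1)))
        (deriv c x₀ * (B ^ (α - 1) - x₀ ^ (α - 1)) +
          c x₀ * (-((α - 1) * x₀ ^ (α - 2)))) x₀ := by
      exact hW.mul (hpow.const_sub (B ^ (α - 1)))
    have hrhs : HasDerivAt (fun z => g B - g z) (-(deriv g x₀)) x₀ :=
      ((hg x₀ hx₀').hasDerivAt).const_sub (g B)
    have huniq := (hprod.congr_of_eventuallyEq (hkey.mono fun z h => h.symm)).unique hrhs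
    have hgder : deriv g x₀ = c x₀ * ((α - 1) * x₀ ^ (α - 2)) := by
      rw [hcdef]; field_simp
    have hzero : deriv c x₀ * (B ^ (α - 1) - x₀ ^ (α - 1)) = 0 := by
      rw [hgder] at huniq; linarith [huniq]
    have : deriv c x₀ = 0 := by
      rcases mul_eq_zero.1 hzero with h | h
      · exact h
      · exact absurd h hBz.self_of_nhds
    rwa [this] at hW
  exact const_of_deriv0 hc0

theorem final : ContDiffOn ℝ (⊤ : ℕ∞) f (Set.Ioi 0) := by
  have hβ : α - 1 ≠ 0 := sub_ne_zero.2 hα1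
  have hgs := g_smooth hα0 hα1 hdiff hfde
  have hg : ∀ x ∈ Ioi (0:ℝ), DifferentiableAt ℝ (deriv f) x := fun x hx =>
    ((hgs.contDiffAt (Ioi_mem_nhds (mem_Ioi.1 hx))).of_le
      (by exact_mod_cast le_top : ((1:ℕ∞) : WithTop ℕ∞) ≤ ∞)).differentiableAt
      (by simp)
  have hcc := c_is_const hα0 hα1 hdiff hfde hg
  set C := deriv (deriv f) 1 / ((α - 1) * 1 ^ (α - 2)) with hCdef
  have hM : ∀ {y : ℝ}, 0 < y → (α - 1) * y ^ (α - 2) ≠ 0 := fun hy =>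
    mul_ne_zero hβ (Real.rpow_pos_of_pos hy _).ne'
  have h1 : ∀ x ∈ Ioi (0:ℝ), deriv (deriv f) x = C * ((α - 1) * x ^ (α - 2)) := by
    intro x hx
    have := hcc x hx
    rw [div_eq_iff (hM (mem_Ioi.1 hx))] at this
    exact this
  -- first integration
  have hpow : ∀ {x : ℝ}, 0 < x → HasDerivAt (fun z : ℝ => z ^ (α - 1))
      ((α - 1) * x ^ (α - 2)) x := by
    intro x hx
    have := Real.hasDerivAt_rpow_const (p := α - 1) (Or.inl hx.ne')
    simpa [show α - 1 - 1 = α - 2 by ring] using this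
  have h2 : ∀ x ∈ Ioi (0:ℝ), HasDerivAt (fun t => deriv f t - C * t ^ (α - 1)) 0 x := by
    intro x hx
    have := ((hg x hx).hasDerivAt).sub ((hpow (mem_Ioi.1 hx)).const_mul C)
    rwa [h1 x hx, sub_self ] at this
  have h2' := const_of_deriv0 h2
  set D0 := deriv f 1 - C * 1 ^ (α - 1) with hD0def
  have hgx : ∀ x ∈ Ioi (0:ℝ), deriv f x = C * x ^ (α - 1) + D0 := by
    intro x hx
    linarith [h2' x hx]
  -- second integration
  have h3 : ∀ x ∈ Ioi (0:ℝ), HasDerivAt (fun t => f t - C / α * t ^ α - D0 * t) 0 x := by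
    intro x hx
    have hx' := mem_Ioi.1 hx
    have hfx : HasDerivAt f (deriv f x) x := (hdiff x hx).hasDerivAt
    have hpα : HasDerivAt (fun z : ℝ => z ^ α) (α * x ^ (α - 1)) x :=
      Real.hasDerivAt_rpow_const (Or.inl hx'.ne')
    have hid : HasDerivAt (fun t : ℝ => D0 * t) D0 x := by
      simpa using (hasDerivAt_id x).const_mul D0
    have := (hfx.sub (hpα.const_mul (C / α))).sub hid
    have hval : deriv f x - C / α * (α * x ^ (α - 1)) - D0 = 0 := by
      rw [hgx x hx]; field_simp; ring
    rwa [hval] at this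
  have h3' := const_of_deriv0 h3
  set E0 := f 1 - C / α * 1 ^ α - D0 * 1 with hE0def
  have hfx : ∀ x ∈ Ioi (0:ℝ), f x = C / α * x ^ α + D0 * x + E0 := by
    intro x hx
    linarith [h3' x hx]
  -- conclude: f agrees with an analytic function
  have htarget : ContDiffOn ℝ (⊤ : ℕ∞) (fun x : ℝ => C / α * x ^ α + D0 * x + E0) (Ioi 0) := by
    intro x hx
    have hx' := mem_Ioi.1 hx
    exact (((contDiffAt_const.mul (Real.contDiffAt_rpow_const_of_ne hx'.ne')).add
      (contDiffAt_const.mul contDiffAt_id)).add contDiffAt_const).contDiffWithinAt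
  exact htarget.congr fun x hx => hfx x hx

end
end StolarskyProof

theorem stmt_7 (α : ℝ) (hα0 : α ≠ 0) (hα1 : α ≠ 1) (f : ℝ → ℝ)
    (hdiff : ∀ x ∈ Set.Ioi (0 : ℝ), DifferentiableAt ℝ f x)
    (hfde : ∀ a ∈ Set.Ioi (0 : ℝ), ∀ b ∈ Set.Ioi (0 : ℝ),
      f b - f a = (b - a) * deriv f (stolarsky α a b)) :
    ContDiffOn ℝ (⊤ : ℕ∞) f (Set.Ioi 0) :=
  StolarskyProof.final hα0 hα1 hdiff hfde
end

section
/- Every differentiable function f : (0,∞) → ℝ satisfying f(b) - f(a) = (b - a)·f'(S₀(a,b)) for all a, b > 0 is infinitely differentiable on (0,∞). -/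
open Real Set Filter Topology

lemma logMean_eq {a b : ℝ} (h : a ≠ b) :
    logMean a b = (b - a) / (Real.log b - Real.log a) := if_neg h

lemma log_sub_ne {a b : ℝ} (ha : 0 < a) (hb : 0 < b) (h : a ≠ b) :
    Real.log b - Real.log a ≠ 0 := by
  rcases h.lt_or_gt with hlt | hlt
  · have := Real.log_lt_log ha hlt; linarith
  · have := Real.log_lt_log hb hlt; linarith

lemma logMean_pos {a b : ℝ} (ha : 0 < a) (hb : 0 < b) (h : a ≠ b) :
    0 < logMean a b := by
  rw [logMean_eq h]
  rcases h.lt_or_gt with hlt | hlt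
  · exact div_pos (by linarith) (sub_pos.2 (Real.log_lt_log ha hlt))
  · have := Real.log_lt_log hb hlt
    rw [div_pos_iff]; right; constructor <;> linarith

lemma hasDerivAt_logMean {a b : ℝ} (ha : 0 < a) (hb : 0 < b) (h : a ≠ b) :
    HasDerivAt (logMean a)
      ((1 * (Real.log b - Real.log a) - (b - a) * b⁻¹) / (Real.log b - Real.log a) ^ 2) b := by
  have hl := log_sub_ne ha hb h
  have h1 : HasDerivAt (fun y : ℝ => y - a) 1 b := (hasDerivAt_id b).sub_const a
  have h2 : HasDerivAt (fun y => Real.log y - Real.log a) b⁻¹ b :=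
    (Real.hasDerivAt_log hb.ne').sub_const _
  have h3 := h1.div h2 hl
  apply h3.congr_of_eventuallyEq
  have hev : ∀ᶠ y in 𝓝 b, y ≠ a := eventually_ne_nhds h.symm
  filter_upwards [hev] with y hy
  rw [logMean_eq (Ne.symm hy)]
  rfl

lemma exists_logMean {x y : ℝ} (hx : 0 < x) (hxy : x < y) :
    ∃ a, 0 < a ∧ a ≤ x ∧ logMean a y = x := by
  have hy : 0 < y := hx.trans hxy
  set a₀ := y * Real.exp (-(y / x)) with ha₀def
  have ha₀pos : 0 < a₀ := mul_pos hy (Real.exp_pos _)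
  have hr : 0 < y / x := div_pos hy hx
  have ha₀x : a₀ ≤ x := by
    have h1 : y / x ≤ Real.exp (y / x) := by
      have := Real.add_one_le_exp (y / x); linarith
    have h2 : y ≤ x * Real.exp (y / x) := by
      have := mul_le_mul_of_nonneg_left h1 hx.le
      rw [mul_div_cancel₀ _ hx.ne'] at this
      linarith
    rw [ha₀def, Real.exp_neg]
    rw [mul_inv_le_iff₀ (Real.exp_pos _)]
    linarith
  have hlogsub : ∀ a : ℝ, 0 < a → a < y → Real.log y - Real.log a ≠ 0 := by
    intro a hap hay
    have := Real.log_lt_log hap hay; linarith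
  have hcont : ContinuousOn (fun a => logMean a y) (Icc a₀ x) := by
    have hF : ContinuousOn (fun a => (y - a) / (Real.log y - Real.log a)) (Icc a₀ x) := by
      apply ContinuousOn.div
      · exact continuousOn_const.sub continuousOn_id
      · exact continuousOn_const.sub (Real.continuousOn_log.mono (by
          intro a ha
          simp only [mem_compl_iff, mem_singleton_iff]
          exact (lt_of_lt_of_le ha₀pos ha.1).ne'))
      · intro a ha
        exact hlogsub a (lt_of_lt_of_le ha₀pos ha.1) (lt_of_le_of_lt ha.2 hxy)
    apply hF.congr
    intro a ha
    exact logMean_eq (lt_of_le_of_lt ha.2 hxy).ne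
  have h1 : logMean a₀ y ≤ x := by
    rw [logMean_eq (lt_of_le_of_lt ha₀x hxy).ne]
    have hlog : Real.log y - Real.log a₀ = y / x := by
      rw [ha₀def, Real.log_mul hy.ne' (Real.exp_ne_zero _), Real.log_exp]; ring
    rw [hlog, div_le_iff₀ hr]
    have hxyx : x * (y / x) = y := by field_simp
    rw [hxyx]; linarith
  have h2 : x ≤ logMean x y := by
    rw [logMean_eq hxy.ne]
    have hden : 0 < Real.log y - Real.log x := sub_pos.2 (Real.log_lt_log hx hxy)
    rw [le_div_iff₀ hden]
    have hl : Real.log y - Real.log x = Real.log (y / x) := (Real.log_div hy.ne' hx.ne').symm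
    have hlt : Real.log (y / x) < y / x - 1 := by
      apply Real.log_lt_sub_one_of_pos hr
      intro hc
      rw [div_eq_one_iff_eq hx.ne'] at hc
      exact hxy.ne' hc
    have hxr : x * (y / x) = y := by field_simp
    nlinarith [hl, hlt, hx]
  have hmem : x ∈ Icc ((fun a => logMean a y) a₀) ((fun a => logMean a y) x) := ⟨h1, h2⟩
  obtain ⟨a, haI, hax⟩ := intermediate_value_Icc ha₀x hcont hmem
  exact ⟨a, lt_of_lt_of_le ha₀pos haI.1, haI.2, hax⟩

theorem stmt_8 (f : ℝ → ℝ)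
    (hdiff : ∀ x ∈ Set.Ioi (0 : ℝ), DifferentiableAt ℝ f x)
    (hfde : ∀ a ∈ Set.Ioi (0 : ℝ), ∀ b ∈ Set.Ioi (0 : ℝ),
      f b - f a = (b - a) * deriv f (logMean a b)) :
    ContDiffOn ℝ (⊤ : ℕ∞) f (Set.Ioi 0) := by
  set g := deriv f with hgdef
  set k := Real.exp 1 with hkdef
  have hk : 1 < k := by
    rw [hkdef]
    have := Real.add_one_le_exp (1 : ℝ)
    linarith
  set G : ℝ → ℝ := fun z => (f (k / (k - 1) * z) - f (1 / (k - 1) * z)) / z with hGdef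
  -- step 1: representation of g on Ioi 0
  have hgG : ∀ z ∈ Ioi (0 : ℝ), g z = G z := by
    intro z hz
    have hz' : (0 : ℝ) < z := hz
    have hk1 : (0 : ℝ) < k - 1 := by linarith
    set y := z / (k - 1) with hydef
    have hy : 0 < y := div_pos hz' hk1
    have hky : 0 < k * y := mul_pos (by linarith) hy
    have hne : y ≠ k * y := by
      intro hc
      nlinarith [hy, hk1]
    have hM : logMean y (k * y) = z := by
      rw [logMean_eq hne, Real.log_mul (by positivity) hy.ne', hkdef, Real.log_exp]
      have : k * y - y = z := by
        rw [hydef]; field_simp; try ring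
      rw [show Real.exp 1 * y - y = k * y - y from by rw [hkdef], this]
      rw [show (1 : ℝ) + Real.log y - Real.log y = 1 from by ring, div_one]
    have key := hfde y hy (k * y) hky
    rw [hM] at key
    have h1 : k * y - y = z := by rw [hydef]; field_simp; try ring
    have h2 : k / (k - 1) * z = k * y := by rw [hydef]; field_simp; try ring
    have h3 : 1 / (k - 1) * z = y := by rw [hydef]; field_simp
    rw [hGdef]
    simp only [h2, h3]
    rw [h1] at key
    field_simp
    linarith [key]
  -- step 2: g is differentiable on Ioi 0
  have hgdiff : ∀ z ∈ Ioi (0 : ℝ), DifferentiableAt ℝ g z := by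
    intro z hz
    have hz' : (0 : ℝ) < z := hz
    have hk1 : (0 : ℝ) < k - 1 := by linarith
    have hGd : DifferentiableAt ℝ G z := by
      apply DifferentiableAt.div _ differentiableAt_fun_id hz'.ne'
      apply DifferentiableAt.sub
      · exact (hdiff _ (mem_Ioi.2 (mul_pos (div_pos (by linarith) hk1) hz'))).comp z
          (differentiableAt_fun_id.const_mul _)
      · exact (hdiff _ (mem_Ioi.2 (mul_pos (div_pos one_pos hk1) hz'))).comp z
          (differentiableAt_fun_id.const_mul _)
    have hev : g =ᶠ[𝓝 z] G := eventuallyEq_of_mem (isOpen_Ioi.mem_nhds hz) hgG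
    exact hev.differentiableAt_iff.mpr hGd
  -- step 3: the derivative relation
  have eqI : ∀ a b : ℝ, 0 < a → 0 < b → a ≠ b →
      g b = g (logMean a b) + deriv g (logMean a b) *
        (logMean a b - (logMean a b) ^ 2 / b) := by
    intro a b ha hb hab
    set x := logMean a b with hxdef
    have hx : 0 < x := logMean_pos ha hb hab
    have hl := log_sub_ne ha hb hab
    have hL := hasDerivAt_logMean ha hb hab
    have hgx : HasDerivAt g (deriv g x) x := (hgdiff x hx).hasDerivAt
    have hcomp : HasDerivAt (fun y => g (logMean a y))
        (deriv g x * ((1 * (Real.log b - Real.log a) - (b - a) * b⁻¹)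
          / (Real.log b - Real.log a) ^ 2)) b := by
      exact HasDerivAt.comp b (hxdef ▸ hgx) hL
    have hmul : HasDerivAt (fun y => (y - a) * g (logMean a y))
        (1 * g (logMean a b) + (b - a) * (deriv g x *
          ((1 * (Real.log b - Real.log a) - (b - a) * b⁻¹)
            / (Real.log b - Real.log a) ^ 2))) b :=
      ((hasDerivAt_id b).sub_const a).mul hcomp
    have hLHS : HasDerivAt (fun y => f y - f a) (g b) b :=
      ((hdiff b hb).hasDerivAt).sub_const _
    have heq : (fun y => f y - f a) =ᶠ[𝓝 b] (fun y => (y - a) * g (logMean a y)) := by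
      filter_upwards [isOpen_Ioi.mem_nhds hb] with y hy
      exact hfde a ha y hy
    have h' : HasDerivAt (fun y => (y - a) * g (logMean a y)) (g b) b :=
      hLHS.congr_of_eventuallyEq heq.symm
    have huniq := h'.unique hmul
    rw [huniq]
    have hxeq : x = (b - a) / (Real.log b - Real.log a) := logMean_eq hab
    rw [← hxdef, hxeq]
    field_simp
  -- step 4: key relation
  have keyrel : ∀ x : ℝ, 0 < x → ∀ y : ℝ, x < y →
      y * g y = (g x + x * deriv g x) * y - x ^ 2 * deriv g x := by
    intro x hx y hxy
    obtain ⟨a, hapos, hax, haM⟩ := exists_logMean hx hxy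
    have hay : a ≠ y := (lt_of_le_of_lt hax hxy).ne
    have hE := eqI a y hapos (hx.trans hxy) hay
    rw [haM] at hE
    rw [hE]
    have hy : (0 : ℝ) < y := hx.trans hxy
    field_simp
    ring
  -- step 5: constants are constant
  have hCDle : ∀ x₁ x₂ : ℝ, 0 < x₁ → 0 < x₂ → x₁ ≤ x₂ →
      g x₁ + x₁ * deriv g x₁ = g x₂ + x₂ * deriv g x₂ ∧
        x₁ ^ 2 * deriv g x₁ = x₂ ^ 2 * deriv g x₂ := by
    intro x₁ x₂ h₁ h₂ hle
    have e11 := keyrel x₁ h₁ (x₂ + 1) (by linarith)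
    have e12 := keyrel x₁ h₁ (x₂ + 2) (by linarith)
    have e21 := keyrel x₂ h₂ (x₂ + 1) (by linarith)
    have e22 := keyrel x₂ h₂ (x₂ + 2) (by linarith)
    have q1 : (g x₁ + x₁ * deriv g x₁) * (x₂ + 1) - x₁ ^ 2 * deriv g x₁ =
        (g x₂ + x₂ * deriv g x₂) * (x₂ + 1) - x₂ ^ 2 * deriv g x₂ := by
      rw [← e11, ← e21]
    have q2 : (g x₁ + x₁ * deriv g x₁) * (x₂ + 2) - x₁ ^ 2 * deriv g x₁ =
        (g x₂ + x₂ * deriv g x₂) * (x₂ + 2) - x₂ ^ 2 * deriv g x₂ := by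
      rw [← e12, ← e22]
    have hA : g x₁ + x₁ * deriv g x₁ = g x₂ + x₂ * deriv g x₂ := by
      linear_combination q2 - q1
    refine ⟨hA, ?_⟩
    linear_combination (x₂ + 1) * hA - q1
  have hCD : ∀ x₁ x₂ : ℝ, 0 < x₁ → 0 < x₂ →
      g x₁ + x₁ * deriv g x₁ = g x₂ + x₂ * deriv g x₂ ∧
        x₁ ^ 2 * deriv g x₁ = x₂ ^ 2 * deriv g x₂ := by
    intro x₁ x₂ h₁ h₂
    rcases le_total x₁ x₂ with h | h
    · exact hCDle x₁ x₂ h₁ h₂ h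
    · obtain ⟨hA, hB⟩ := hCDle x₂ x₁ h₂ h₁ h
      exact ⟨hA.symm, hB.symm⟩
  set C := g 1 + deriv g 1 with hCdef
  set D := -(deriv g 1) with hDdef
  -- step 6: formula for g
  have hgform : ∀ y : ℝ, 0 < y → y * g y = C * y + D := by
    intro y hy
    have h2 : (0 : ℝ) < y / 2 := by linarith
    have hkr := keyrel (y / 2) h2 y (by linarith)
    obtain ⟨hA, hB⟩ := hCD (y / 2) 1 h2 one_pos
    rw [hkr, hA, hB]
    rw [hCdef, hDdef]
    ring
  -- step 7: formula for f
  have hfform : ∀ b ∈ Ioi (0 : ℝ), f b = f 1 + C * (b - 1) + D * Real.log b := by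
    intro b hb
    have hb' : (0 : ℝ) < b := hb
    by_cases hb1 : b = 1
    · subst hb1; simp
    have h1b : (1 : ℝ) ≠ b := fun hc => hb1 hc.symm
    have key := hfde 1 (mem_Ioi.2 one_pos) b hb
    set L := logMean 1 b with hLdef
    have hL : 0 < L := logMean_pos one_pos hb' h1b
    have hgL := hgform L hL
    have hlogne : Real.log b ≠ 0 := by
      intro hc
      rcases Real.log_eq_zero.1 hc with h | h | h <;> [linarith; exact hb1 h; linarith]
    have hLval : L = (b - 1) / Real.log b := by
      rw [hLdef, logMean_eq h1b, Real.log_one]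
      ring_nf
    have hbL : b - 1 = L * Real.log b := by
      rw [hLval]; field_simp
    have hfb : f b = f 1 + (b - 1) * g L := by linarith [key]
    rw [hfb]
    linear_combination (g L) * hbL + (Real.log b) * hgL - C * hbL
  -- step 8: conclude
  have hsm : ContDiffOn ℝ (⊤ : ℕ∞) (fun b => f 1 + C * (b - 1) + D * Real.log b) (Ioi 0) := by
    apply ContDiffOn.add
    · apply ContDiffOn.add contDiffOn_const
      exact (contDiff_const.mul (contDiff_id.sub contDiff_const)).contDiffOn
    · apply contDiffOn_const.mul
      exact Real.contDiffOn_log.mono (fun x hx => by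
        simp only [mem_compl_iff, mem_singleton_iff]
        exact ne_of_gt hx)
  exact hsm.congr hfform
end

section
/- Let f : ℝ → ℝ be a differentiable function such that f(b) - f(a) = (b - a)·f'((a + b)/2) for all a, b ∈ ℝ. Then f is a quadratic polynomial, i.e., there exist constants c₁, c₂, c₃ ∈ ℝ such that f(x) = c₁·x² + c₂·x + c₃ for all x ∈ ℝ. -/
/-! Taking `a = x - 1`, `b = x + 1` expresses `f'` through values of `f`, so `f'` is itself
differentiable. Differentiating the equation in `b` then gives
`f' b = f' ((a + b) / 2) + (b - a) / 2 * f'' ((a + b) / 2)`, and `a = -b` shows that `f'` is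
affine. Feeding this back into the equation with `a = 0` makes `f` quadratic. -/

def MidpointMeanValue (f : ℝ → ℝ) : Prop :=
  ∀ a b : ℝ, f b - f a = (b - a) * deriv f ((a + b) / 2)

namespace MidpointMeanValue

variable {f : ℝ → ℝ}

theorem deriv_eq (hf : MidpointMeanValue f) (x : ℝ) :
    deriv f x = (f (x + 1) - f (x - 1)) / 2 := by
  have h := hf (x - 1) (x + 1)
  rw [show (x - 1 + (x + 1)) / 2 = x by ring] at h
  linarith

theorem differentiable_deriv (hf : MidpointMeanValue f) (hd : Differentiable ℝ f) :
    Differentiable ℝ (deriv f) := by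
  rw [show deriv f = fun x => (f (x + 1) - f (x - 1)) / 2 from funext hf.deriv_eq]
  fun_prop

theorem deriv_eq_deriv_midpoint_add (hf : MidpointMeanValue f) (hd : Differentiable ℝ f)
    (a b : ℝ) :
    deriv f b = deriv f ((a + b) / 2) + (b - a) / 2 * deriv (deriv f) ((a + b) / 2) := by
  have hmid : HasDerivAt (fun t : ℝ => (a + t) / 2) (1 / 2) b := by
    simpa using ((hasDerivAt_id b).const_add a).div_const 2
  have hderiv_mid : HasDerivAt (fun t => deriv f ((a + t) / 2))
      (deriv (deriv f) ((a + b) / 2) * (1 / 2)) b :=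
    HasDerivAt.comp (h₂ := deriv f) b
      ((hf.differentiable_deriv hd) ((a + b) / 2)).hasDerivAt hmid
  have hrhs : HasDerivAt (fun t => (t - a) * deriv f ((a + t) / 2))
      (1 * deriv f ((a + b) / 2) + (b - a) * (deriv (deriv f) ((a + b) / 2) * (1 / 2))) b :=
    ((hasDerivAt_id b).sub_const a).mul hderiv_mid
  have hlhs : HasDerivAt (fun t => (t - a) * deriv f ((a + t) / 2)) (deriv f b) b := by
    simpa only [← hf a] using (hd b).hasDerivAt.sub_const (f a)
  rw [hlhs.unique hrhs]
  ring

theorem deriv_eq_affine (hf : MidpointMeanValue f) (hd : Differentiable ℝ f) (x : ℝ) :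
    deriv f x = deriv f 0 + deriv (deriv f) 0 * x := by
  have h := hf.deriv_eq_deriv_midpoint_add hd (-x) x
  rw [show (-x + x) / 2 = 0 by ring] at h
  linarith

theorem eq_quadratic (hf : MidpointMeanValue f) (hd : Differentiable ℝ f) (x : ℝ) :
    f x = deriv (deriv f) 0 / 2 * x ^ 2 + deriv f 0 * x + f 0 := by
  have h := hf 0 x
  rw [hf.deriv_eq_affine hd] at h
  linarith

end MidpointMeanValue

theorem stmt_13 (f : ℝ → ℝ) (hdiff : Differentiable ℝ f)
    (hfde : ∀ a b : ℝ, f b - f a = (b - a) * deriv f ((a + b) / 2)) :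
    ∃ c₁ c₂ c₃ : ℝ, ∀ x : ℝ, f x = c₁ * x ^ 2 + c₂ * x + c₃ :=
  ⟨_, _, _, MidpointMeanValue.eq_quadratic hfde hdiff⟩
end
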